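/- arXiv:1111.1433 — 7 statements merged into one kernel-verified Lean document; each statement's English description precedes it below -/
import Mathlib

section
/- Let S be the numerical semigroup generated by positive integers n_1,...,n_k with gcd(n_1,...,n_k)=1, let T(S)={g_1,...,g_t} be its set of pseudo-Frobenius numbers, and let f be an odd integer with f ≥ 3g(S)+1. Then the additive submonoid T of ℕ generated by 2n_1,...,2n_k, f−2g_1,...,f−2g_t is a numerical semigroup, i.e., its complement ℕ \ T is finite. -/
/-- Membership of an integer in an additive submonoid of `ℕ`, viewed inside `ℤ`
via the inclusion `ℕ ⊆ ℤ`. -/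
def AddSubmonoid.zmem (S : AddSubmonoid ℕ) (x : ℤ) : Prop :=
  ∃ n : ℕ, n ∈ S ∧ (n : ℤ) = x

/-- The Frobenius number `g(S) = max {x ∈ ℤ : x ∉ S}` of a numerical semigroup. -/
noncomputable def frobeniusNumber (S : AddSubmonoid ℕ) : ℤ :=
  sSup {x : ℤ | ¬ S.zmem x}

/-- The set of pseudo-Frobenius numbers
`T(S) = {x ∈ ℤ \ S : x + s ∈ S for all s ∈ S, s ≠ 0}`. -/
def pseudoFrobeniusSet (S : AddSubmonoid ℕ) : Set ℤ :=
  {x : ℤ | ¬ S.zmem x ∧ ∀ s ∈ S, s ≠ 0 → S.zmem (x + s)}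

/-!
Since `gcd(n₁,…,n_k) = 1`, `S` has finite complement, so its Frobenius number `F` exists,
is at least `-1`, and is a pseudo-Frobenius number. Hence `f - 2F`, a positive odd integer,
is among the generators of `T`. A common divisor of all generators of `T` divides the odd
number `f - 2F`, so it is odd and therefore divides every `nᵢ`; thus the generators of `T`
have gcd `1`, and `T` has finite complement as well.
-/

theorem Nat.setGcd_range_eq_finset_gcd {ι : Type*} [Fintype ι] (n : ι → ℕ) :
    Nat.setGcd (Set.range n) = Finset.univ.gcd n :=
  Nat.dvd_antisymm
    (Finset.dvd_gcd fun i _ ↦ Nat.setGcd_dvd_of_mem ⟨i, rfl⟩)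
    (Nat.dvd_setGcd_iff.mpr <| by
      rintro _ ⟨i, rfl⟩
      exact Finset.gcd_dvd (Finset.mem_univ i))

theorem Nat.finite_compl_closure_of_setGcd_eq_one {s : Set ℕ} (hs : Nat.setGcd s = 1) :
    ((AddSubmonoid.closure s : Set ℕ)ᶜ).Finite := by
  obtain ⟨N, hN⟩ := Nat.exists_mem_closure_of_ge s
  refine (Set.finite_Iio N).subset fun m hm ↦ ?_
  by_contra hmN
  exact hm (hN m (not_lt.mp hmN) (hs ▸ one_dvd m))

theorem Nat.setGcd_eq_one_of_odd_mem {ι : Type*} {s : Set ℕ} {n : ι → ℕ} {m : ℕ}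
    (hn : Nat.setGcd (Set.range n) = 1) (hns : ∀ i, 2 * n i ∈ s) (hm : Odd m) (hms : m ∈ s) :
    Nat.setGcd s = 1 := by
  have hd2 : Nat.Coprime (Nat.setGcd s) 2 :=
    Nat.coprime_two_right.mpr (hm.of_dvd_nat (Nat.setGcd_dvd_of_mem hms))
  refine Nat.dvd_one.mp (hn ▸ Nat.dvd_setGcd_iff.mpr ?_)
  rintro _ ⟨i, rfl⟩
  exact hd2.dvd_of_dvd_mul_left (Nat.setGcd_dvd_of_mem (hns i))

namespace AddSubmonoid

variable {S : AddSubmonoid ℕ}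

theorem not_zmem_neg_one : ¬ S.zmem (-1) := by
  rintro ⟨n, -, hn⟩
  omega

theorem bddAbove_setOf_not_zmem (hS : ((S : Set ℕ)ᶜ).Finite) :
    BddAbove {x : ℤ | ¬ S.zmem x} := by
  refine ((bddAbove_Iio (a := (0 : ℤ))).union (hS.image ((↑) : ℕ → ℤ)).bddAbove).mono fun x hx ↦ ?_
  rcases lt_or_ge x 0 with hx0 | hx0
  · exact Or.inl hx0
  · refine Or.inr ⟨x.toNat, fun hxS ↦ hx ⟨x.toNat, hxS, ?_⟩, ?_⟩ <;> omega

theorem not_zmem_frobeniusNumber (hS : ((S : Set ℕ)ᶜ).Finite) :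
    ¬ S.zmem (frobeniusNumber S) :=
  Int.csSup_mem ⟨-1, not_zmem_neg_one⟩ (bddAbove_setOf_not_zmem hS)

theorem zmem_of_frobeniusNumber_lt (hS : ((S : Set ℕ)ᶜ).Finite) {x : ℤ}
    (hx : frobeniusNumber S < x) : S.zmem x := by
  by_contra hxS
  exact hx.not_ge (le_csSup (bddAbove_setOf_not_zmem hS) hxS)

theorem neg_one_le_frobeniusNumber (hS : ((S : Set ℕ)ᶜ).Finite) : -1 ≤ frobeniusNumber S :=
  le_csSup (bddAbove_setOf_not_zmem hS) not_zmem_neg_one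

theorem frobeniusNumber_mem_pseudoFrobeniusSet (hS : ((S : Set ℕ)ᶜ).Finite) :
    frobeniusNumber S ∈ pseudoFrobeniusSet S := by
  refine ⟨not_zmem_frobeniusNumber hS, fun s _ hs0 ↦ zmem_of_frobeniusNumber_lt hS ?_⟩
  have : (0 : ℤ) < s := by exact_mod_cast Nat.pos_of_ne_zero hs0
  linarith

end AddSubmonoid

theorem stmt0_general (k : ℕ) (n : Fin k → ℕ)
    (hgcd : Finset.univ.gcd n = 1)
    (S : AddSubmonoid ℕ) (hS : S = AddSubmonoid.closure (Set.range n))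
    (t : ℕ) (g : Fin t → ℤ) (hg : pseudoFrobeniusSet S = Set.range g)
    (f : ℤ) (hodd : Odd f) (hf : 3 * frobeniusNumber S + 1 ≤ f)
    (T : AddSubmonoid ℕ)
    (hT : T = AddSubmonoid.closure
      (Set.range (fun i => 2 * n i) ∪ Set.range (fun j => (f - 2 * g j).toNat))) :
    ((T : Set ℕ)ᶜ).Finite := by
  have hn : Nat.setGcd (Set.range n) = 1 := by rwa [Nat.setGcd_range_eq_finset_gcd]
  have hSfin : ((S : Set ℕ)ᶜ).Finite := hS ▸ Nat.finite_compl_closure_of_setGcd_eq_one hn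
  obtain ⟨j, hj⟩ : frobeniusNumber S ∈ Set.range g :=
    hg ▸ AddSubmonoid.frobeniusNumber_mem_pseudoFrobeniusSet hSfin
  have hF := AddSubmonoid.neg_one_le_frobeniusNumber hSfin
  have hm : Odd (f - 2 * g j).toNat := by
    rw [← Int.odd_coe_nat, Int.toNat_of_nonneg (by linarith)]
    exact hodd.sub_even (even_two_mul _)
  rw [hT]
  exact Nat.finite_compl_closure_of_setGcd_eq_one <|
    Nat.setGcd_eq_one_of_odd_mem hn (fun i ↦ Or.inl ⟨i, rfl⟩) hm (Or.inr ⟨j, rfl⟩)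

/-- if `S = ⟨n₁,…,n_k⟩` with `gcd(n₁,…,n_k) = 1`,
`T(S) = {g₁,…,g_t}` and `f` is odd with `f ≥ 3 g(S) + 1`, then the additive
submonoid of `ℕ` generated by `2n₁,…,2n_k, f − 2g₁,…,f − 2g_t` has finite
complement in `ℕ`, i.e. it is a numerical semigroup. -/
theorem stmt0 (k : ℕ) (hk : 0 < k) (n : Fin k → ℕ) (hn : ∀ i, 0 < n i)
    (hgcd : Finset.univ.gcd n = 1)
    (S : AddSubmonoid ℕ) (hS : S = AddSubmonoid.closure (Set.range n))
    (t : ℕ) (g : Fin t → ℤ) (hg : pseudoFrobeniusSet S = Set.range g)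
    (f : ℤ) (hodd : Odd f) (hf : 3 * frobeniusNumber S + 1 ≤ f)
    (T : AddSubmonoid ℕ)
    (hT : T = AddSubmonoid.closure
      (Set.range (fun i => 2 * n i) ∪ Set.range (fun j => (f - 2 * g j).toNat))) :
    ((T : Set ℕ)ᶜ).Finite :=
  stmt0_general k n hgcd S hS t g hg f hodd hf T hT
end

section
/- Let S be the numerical semigroup generated by positive integers n_1,...,n_k with gcd(n_1,...,n_k)=1, let T(S)={g_1,...,g_t} be its set of pseudo-Frobenius numbers, and let f be an odd integer with f ≥ 3g(S)+1. Let T be the numerical semigroup generated by 2n_1,...,2n_k, f−2g_1,...,f−2g_t. Then the Frobenius number of T equals f, and T is symmetric; that is, for every integer z, z ∉ T if and only if f − z ∈ T. -/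
/-!
Write `F = g(S)`. The semigroup `T` is the set `2S ∪ {f - 2x : x ∈ ℤ \ S}`. Indeed this set is
closed under addition: mixed sums stay of the second kind because `S + S ⊆ S`, and the sum of two
elements of the second kind is `2(f - x - y)` with `f - x - y ≥ f - 2F > F`. It contains the
generators of `T`, and conversely each `f - 2x` with `x ∉ S` lies in `T`, because `x + s` is a
pseudo-Frobenius number `g_j` for some `s ∈ S`, so `f - 2x = (f - 2g_j) + 2s`. As `f` is odd, the
two parts are the even and the odd elements of `T`, and `z ↦ f - z` swaps `2S` with the even
gaps `2(ℤ \ S)` and the odd elements with the odd gaps `f - 2S`.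
-/

namespace AddSubmonoid

variable {S : AddSubmonoid ℕ} {x y : ℤ}

theorem zmem_natCast {m : ℕ} : S.zmem m ↔ m ∈ S := by
  simp [zmem]

theorem zmem_zero : S.zmem 0 := ⟨0, S.zero_mem, rfl⟩

theorem zmem.nonneg (h : S.zmem x) : 0 ≤ x := by
  obtain ⟨m, -, rfl⟩ := h
  positivity

theorem zmem.add (hx : S.zmem x) (hy : S.zmem y) : S.zmem (x + y) := by
  obtain ⟨a, ha, rfl⟩ := hx
  obtain ⟨b, hb, rfl⟩ := hy
  exact ⟨a + b, S.add_mem ha hb, by push_cast; rfl⟩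

theorem two_mul_mem_closure_range {ι : Type*} {n : ι → ℕ} {b : ℕ}
    (hb : b ∈ closure (Set.range n)) : 2 * b ∈ closure (Set.range fun i => 2 * n i) := by
  induction hb using closure_induction with
  | mem x hx =>
    obtain ⟨i, rfl⟩ := hx
    exact subset_closure ⟨i, rfl⟩
  | zero => exact zero_mem _
  | add x y _ _ hx hy =>
    rw [mul_add]
    exact add_mem hx hy

theorem exists_forall_ge_mem_closure_range {ι : Type*} [Fintype ι] (n : ι → ℕ)
    (h : Finset.univ.gcd n = 1) : ∃ N, ∀ m ≥ N, m ∈ closure (Set.range n) := by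
  obtain ⟨N, hN⟩ := Nat.exists_mem_closure_of_ge (Set.range n)
  have hgcd : Nat.setGcd (Set.range n) ∣ 1 :=
    h ▸ Finset.dvd_gcd fun i _ => Nat.setGcd_dvd_of_mem ⟨i, rfl⟩
  exact ⟨N, fun m hm => hN m hm (hgcd.trans (one_dvd m))⟩

end AddSubmonoid

open AddSubmonoid

theorem frobeniusNumber_eq_of_forall_lt_zmem {T : AddSubmonoid ℕ} {f : ℤ} (hf : ¬ T.zmem f)
    (h : ∀ z, f < z → T.zmem z) : frobeniusNumber T = f :=
  IsGreatest.csSup_eq ⟨hf, fun z hz => not_lt.1 fun hlt => hz (h z hlt)⟩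

section NumericalSemigroup

variable {S : AddSubmonoid ℕ} {x : ℤ}

theorem bddAbove_setOf_not_zmem (hS : ∃ N, ∀ m ≥ N, m ∈ S) :
    BddAbove {x : ℤ | ¬ S.zmem x} := by
  obtain ⟨N, hN⟩ := hS
  refine ⟨N, fun x hx => ?_⟩
  by_contra! h
  exact hx ⟨x.toNat, hN _ (by omega), by omega⟩

theorem le_frobeniusNumber (hS : ∃ N, ∀ m ≥ N, m ∈ S) (hx : ¬ S.zmem x) :
    x ≤ frobeniusNumber S :=
  le_csSup (bddAbove_setOf_not_zmem hS) hx

theorem zmem_of_frobeniusNumber_lt (hS : ∃ N, ∀ m ≥ N, m ∈ S) (hx : frobeniusNumber S < x) :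
    S.zmem x :=
  of_not_not fun h => hx.not_ge (le_frobeniusNumber hS h)

theorem neg_one_le_frobeniusNumber (hS : ∃ N, ∀ m ≥ N, m ∈ S) : -1 ≤ frobeniusNumber S :=
  le_frobeniusNumber hS fun h => by linarith [h.nonneg]

theorem exists_pseudoFrobenius_eq_add (hS : ∃ N, ∀ m ≥ N, m ∈ S) (hx : ¬ S.zmem x) :
    ∃ y ∈ pseudoFrobeniusSet S, ∃ s : ℕ, s ∈ S ∧ y = x + s := by
  -- the largest gap of the form `x + s` with `s ∈ S` is pseudo-Frobenius
  set A := {y : ℤ | ¬ S.zmem y ∧ ∃ s : ℕ, s ∈ S ∧ y = x + s}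
  have hA : BddAbove A := (bddAbove_setOf_not_zmem hS).mono fun y hy => hy.1
  obtain ⟨hgap, s, hs, hsup⟩ := Int.csSup_mem (⟨x, hx, 0, S.zero_mem, by simp⟩ : A.Nonempty) hA
  refine ⟨sSup A, ⟨hgap, fun s' hs' hs'0 => of_not_not fun h => ?_⟩, s, hs, hsup⟩
  have := le_csSup hA ⟨h, s + s', S.add_mem hs hs', by rw [hsup]; push_cast; ring⟩
  omega

end NumericalSemigroup

section SymmetricDouble

def symmetricDouble (S : AddSubmonoid ℕ) (f : ℤ) : Set ℤ :=
  {z | (∃ m, S.zmem m ∧ z = 2 * m) ∨ ∃ m, ¬ S.zmem m ∧ z = f - 2 * m}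

variable {S : AddSubmonoid ℕ} {f m z : ℤ}

theorem two_mul_mem_symmetricDouble_iff (hf : Odd f) : 2 * m ∈ symmetricDouble S f ↔ S.zmem m := by
  obtain ⟨c, rfl⟩ := hf
  refine ⟨?_, fun h => Or.inl ⟨m, h, rfl⟩⟩
  rintro (⟨m', h, e⟩ | ⟨m', -, e⟩)
  · rwa [show m = m' by omega]
  · omega

theorem sub_two_mul_mem_symmetricDouble_iff (hf : Odd f) :
    f - 2 * m ∈ symmetricDouble S f ↔ ¬ S.zmem m := by
  obtain ⟨c, rfl⟩ := hf
  refine ⟨?_, fun h => Or.inr ⟨m, h, rfl⟩⟩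
  rintro (⟨m', -, e⟩ | ⟨m', h, e⟩)
  · omega
  · rwa [show m = m' by omega]

theorem not_mem_symmetricDouble_iff (hf : Odd f) :
    z ∉ symmetricDouble S f ↔ f - z ∈ symmetricDouble S f := by
  obtain ⟨m, rfl | rfl⟩ := Int.even_or_odd' z
  · rw [two_mul_mem_symmetricDouble_iff hf, sub_two_mul_mem_symmetricDouble_iff hf]
  · obtain ⟨c, rfl⟩ := hf
    rw [show 2 * m + 1 = 2 * c + 1 - 2 * (c - m) by ring, sub_sub_cancel,
      sub_two_mul_mem_symmetricDouble_iff ⟨c, rfl⟩, two_mul_mem_symmetricDouble_iff ⟨c, rfl⟩,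
      not_not]

theorem add_mem_symmetricDouble (hS : ∃ N, ∀ m ≥ N, m ∈ S) (hf : 3 * frobeniusNumber S + 1 ≤ f)
    {x y : ℤ} (hx : x ∈ symmetricDouble S f) (hy : y ∈ symmetricDouble S f) :
    x + y ∈ symmetricDouble S f := by
  rcases hx with ⟨a, ha, rfl⟩ | ⟨a, ha, rfl⟩ <;> rcases hy with ⟨b, hb, rfl⟩ | ⟨b, hb, rfl⟩
  · exact Or.inl ⟨a + b, ha.add hb, by ring⟩
  · exact Or.inr ⟨b - a, fun h => hb (by simpa using h.add ha), by ring⟩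
  · exact Or.inr ⟨a - b, fun h => ha (by simpa using h.add hb), by ring⟩
  · refine Or.inl ⟨f - a - b, zmem_of_frobeniusNumber_lt hS ?_, by ring⟩
    linarith [le_frobeniusNumber hS ha, le_frobeniusNumber hS hb]

theorem mem_symmetricDouble_of_lt (hS : ∃ N, ∀ m ≥ N, m ∈ S) (hf : Odd f)
    (hF : 3 * frobeniusNumber S + 1 ≤ f) (hz : f < z) : z ∈ symmetricDouble S f := by
  have := neg_one_le_frobeniusNumber hS
  obtain ⟨c, rfl⟩ := hf
  obtain ⟨m, rfl | rfl⟩ := Int.even_or_odd' z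
  · exact Or.inl ⟨m, zmem_of_frobeniusNumber_lt hS (by omega), rfl⟩
  · exact Or.inr ⟨c - m, fun h => by linarith [h.nonneg], by ring⟩

theorem zmem_iff_mem_symmetricDouble {ι κ : Type*} {n : ι → ℕ} {g : κ → ℤ}
    (hSn : S = AddSubmonoid.closure (Set.range n)) (hS : ∃ N, ∀ m ≥ N, m ∈ S)
    (hg : pseudoFrobeniusSet S = Set.range g) (hf : 3 * frobeniusNumber S + 1 ≤ f)
    {T : AddSubmonoid ℕ}
    (hT : T = AddSubmonoid.closure (Set.range (fun i => 2 * n i) ∪ Set.range (fun j => (f - 2 * g j).toNat)))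
    (z : ℤ) : T.zmem z ↔ z ∈ symmetricDouble S f := by
  have hpseudo j : g j ∈ pseudoFrobeniusSet S := hg ▸ ⟨j, rfl⟩
  have hgen_nonneg j : 0 ≤ f - 2 * g j := by
    linarith [le_frobeniusNumber hS (hpseudo j).1, neg_one_le_frobeniusNumber hS]
  have hgen_mem j : (f - 2 * g j).toNat ∈ T := hT ▸ subset_closure (Or.inr ⟨j, rfl⟩)
  have hdouble {b : ℕ} (hb : b ∈ S) : 2 * b ∈ T :=
    hT ▸ closure_mono Set.subset_union_left (two_mul_mem_closure_range (hSn ▸ hb))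
  constructor
  · rintro ⟨w, hw, rfl⟩
    rw [hT] at hw
    induction hw using closure_induction with
    | mem x hx =>
      rcases hx with ⟨i, rfl⟩ | ⟨j, rfl⟩
      · refine Or.inl ⟨n i, zmem_natCast.2 (hSn ▸ subset_closure ⟨i, rfl⟩), by push_cast; rfl⟩
      · exact Or.inr ⟨g j, (hpseudo j).1, Int.toNat_of_nonneg (hgen_nonneg j)⟩
    | zero => exact Or.inl ⟨0, zmem_zero, rfl⟩
    | add x y _ _ hx hy =>
      push_cast
      exact add_mem_symmetricDouble hS hf hx hy
  · rintro (⟨m, ⟨a, ha, rfl⟩, rfl⟩ | ⟨m, hm, rfl⟩)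
    · exact ⟨2 * a, hdouble ha, by push_cast; rfl⟩
    · obtain ⟨_, hj, s, hs, hjs⟩ := exists_pseudoFrobenius_eq_add hS hm
      obtain ⟨j, rfl⟩ := hg ▸ hj
      refine ⟨(f - 2 * g j).toNat + 2 * s, T.add_mem (hgen_mem j) (hdouble hs), ?_⟩
      push_cast
      rw [Int.toNat_of_nonneg (hgen_nonneg j)]
      omega

end SymmetricDouble

theorem stmt1_general (k : ℕ) (n : Fin k → ℕ)
    (hgcd : Finset.univ.gcd n = 1)
    (S : AddSubmonoid ℕ) (hS : S = AddSubmonoid.closure (Set.range n))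
    (t : ℕ) (g : Fin t → ℤ) (hg : pseudoFrobeniusSet S = Set.range g)
    (f : ℤ) (hodd : Odd f) (hf : 3 * frobeniusNumber S + 1 ≤ f)
    (T : AddSubmonoid ℕ)
    (hT : T = AddSubmonoid.closure
      (Set.range (fun i => 2 * n i) ∪ Set.range (fun j => (f - 2 * g j).toNat))) :
    frobeniusNumber T = f ∧ ∀ z : ℤ, ¬ T.zmem z ↔ T.zmem (f - z) := by
  have hcofinite : ∃ N, ∀ m ≥ N, m ∈ S := hS ▸ exists_forall_ge_mem_closure_range n hgcd
  have hmem := zmem_iff_mem_symmetricDouble hS hcofinite hg hf hT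
  refine ⟨frobeniusNumber_eq_of_forall_lt_zmem ?_ fun z hz => ?_, fun z => ?_⟩
  · rw [hmem]
    simpa using (sub_two_mul_mem_symmetricDouble_iff (S := S) (m := 0) hodd).not.2 (not_not.2 zmem_zero)
  · exact (hmem z).2 (mem_symmetricDouble_of_lt hcofinite hodd hf hz)
  · rw [hmem, hmem]
    exact not_mem_symmetricDouble_iff hodd

/-- with `T = ⟨2n₁,…,2n_k, f−2g₁,…,f−2g_t⟩` as in the half
construction, the Frobenius number of `T` equals `f`, and `T` is symmetric:
for every integer `z`, `z ∉ T ↔ f − z ∈ T`. -/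
theorem stmt1 (k : ℕ) (hk : 0 < k) (n : Fin k → ℕ) (hn : ∀ i, 0 < n i)
    (hgcd : Finset.univ.gcd n = 1)
    (S : AddSubmonoid ℕ) (hS : S = AddSubmonoid.closure (Set.range n))
    (t : ℕ) (g : Fin t → ℤ) (hg : pseudoFrobeniusSet S = Set.range g)
    (f : ℤ) (hodd : Odd f) (hf : 3 * frobeniusNumber S + 1 ≤ f)
    (T : AddSubmonoid ℕ)
    (hT : T = AddSubmonoid.closure
      (Set.range (fun i => 2 * n i) ∪ Set.range (fun j => (f - 2 * g j).toNat))) :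
    frobeniusNumber T = f ∧ ∀ z : ℤ, ¬ T.zmem z ↔ T.zmem (f - z) :=
  stmt1_general k n hgcd S hS t g hg f hodd hf T hT
end

section
/- For every numerical semigroup S, there exist infinitely many symmetric numerical semigroups T such that S = T/2; that is, the set of symmetric numerical semigroups T satisfying {x ∈ ℕ : 2x ∈ T} = S is infinite. -/
namespace Stmt3Aux

lemma zmem_coe (S : AddSubmonoid ℕ) (n : ℕ) : S.zmem n ↔ n ∈ S := by
  constructor
  · rintro ⟨m, hm, h⟩
    have : m = n := by exact_mod_cast h
    exact this ▸ hm
  · exact fun h => ⟨n, h, rfl⟩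

lemma not_zmem_neg (S : AddSubmonoid ℕ) {x : ℤ} (hx : x < 0) : ¬ S.zmem x := by
  rintro ⟨n, _, rfl⟩
  exact absurd (Int.natCast_nonneg n) (not_le.2 hx)

lemma zmem_nonneg {S : AddSubmonoid ℕ} {x : ℤ} (h : S.zmem x) : 0 ≤ x := by
  obtain ⟨n, _, rfl⟩ := h; exact Int.natCast_nonneg n

variable {S : AddSubmonoid ℕ}

def Cofin (S : AddSubmonoid ℕ) : Prop := ((S : Set ℕ)ᶜ).Finite

lemma exists_bound (hS : Cofin S) : ∃ B : ℕ, ∀ n : ℕ, B ≤ n → n ∈ S := by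
  obtain ⟨B, hB⟩ := hS.bddAbove
  refine ⟨B + 1, fun n hn => ?_⟩
  by_contra h
  exact absurd (hB h) (by omega)

lemma frobenius_isGreatest (hS : Cofin S) : IsGreatest {x : ℤ | ¬ S.zmem x} (frobeniusNumber S) := by
  obtain ⟨B, hB⟩ := exists_bound hS
  have hbdd : ∀ z : ℤ, ¬ S.zmem z → z ≤ B := by
    intro z hz
    by_contra h
    push_neg at h
    have hz0 : 0 ≤ z := le_trans (Int.natCast_nonneg B) h.le
    exact hz ⟨z.toNat, hB _ (by omega), by omega⟩
  have hinh : ∃ z : ℤ, ¬ S.zmem z := ⟨-1, not_zmem_neg S (by norm_num)⟩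
  obtain ⟨g, hg, hub⟩ := Int.exists_greatest_of_bdd ⟨B, hbdd⟩ hinh
  have : IsGreatest {x : ℤ | ¬ S.zmem x} g := ⟨hg, hub⟩
  rwa [frobeniusNumber, this.csSup_eq]

lemma not_zmem_frobenius (hS : Cofin S) : ¬ S.zmem (frobeniusNumber S) := (frobenius_isGreatest hS).1

lemma zmem_of_frobenius_lt (hS : Cofin S) {x : ℤ} (hx : frobeniusNumber S < x) : S.zmem x := by
  by_contra h
  exact absurd ((frobenius_isGreatest hS).2 h) (not_le.2 hx)

lemma neg_one_le_frobenius (hS : Cofin S) : (-1 : ℤ) ≤ frobeniusNumber S :=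
  (frobenius_isGreatest hS).2 (not_zmem_neg S (by norm_num))

end Stmt3Aux

namespace Stmt3Aux

variable {S : AddSubmonoid ℕ}

/-- The symmetric numerical semigroup `2S ∪ {2z+f : g - z ∉ S}` for odd `f > g(S)`. -/
def Tf (S : AddSubmonoid ℕ) (hS : Cofin S) (f : ℕ) (hf : Odd f)
    (hfg : frobeniusNumber S < (f : ℤ)) : AddSubmonoid ℕ where
  carrier := {n : ℕ | (∃ s ∈ S, n = 2 * s) ∨
    ∃ z : ℕ, ¬ S.zmem (frobeniusNumber S - z) ∧ n = 2 * z + f}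
  zero_mem' := Or.inl ⟨0, S.zero_mem, rfl⟩
  add_mem' := by
    rintro a b (⟨s, hs, rfl⟩ | ⟨z, hz, rfl⟩) (⟨t, ht, rfl⟩ | ⟨w, hw, rfl⟩)
    · exact Or.inl ⟨s + t, S.add_mem hs ht, by ring⟩
    · refine Or.inr ⟨s + w, ?_, by ring⟩
      intro hmem
      obtain ⟨m, hm, hme⟩ := hmem
      exact hw ⟨m + s, S.add_mem hm hs, by push_cast; push_cast at hme; linarith⟩
    · refine Or.inr ⟨t + z, ?_, by ring⟩
      intro hmem
      obtain ⟨m, hm, hme⟩ := hmem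
      exact hz ⟨m + t, S.add_mem hm ht, by push_cast; push_cast at hme; linarith⟩
    · refine Or.inl ⟨z + w + f, ?_, by ring⟩
      have h := zmem_of_frobenius_lt hS (x := ((z + w + f : ℕ) : ℤ))
        (by push_cast; have := Int.natCast_nonneg z; have := Int.natCast_nonneg w; linarith)
      obtain ⟨m, hm, hme⟩ := h
      have : m = z + w + f := by exact_mod_cast hme
      exact this ▸ hm

variable {hS : Cofin S} {f : ℕ} {hf : Odd f} {hfg : frobeniusNumber S < (f : ℤ)}

lemma mem_Tf_iff {n : ℕ} : n ∈ Tf S hS f hf hfg ↔ (∃ s ∈ S, n = 2 * s) ∨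
    ∃ z : ℕ, ¬ S.zmem (frobeniusNumber S - z) ∧ n = 2 * z + f := Iff.rfl

lemma zmem_Tf_iff {x : ℤ} : (Tf S hS f hf hfg).zmem x ↔
    (∃ y : ℤ, x = 2 * y ∧ S.zmem y) ∨
    (∃ z : ℕ, x = 2 * z + f ∧ ¬ S.zmem (frobeniusNumber S - z)) := by
  constructor
  · rintro ⟨n, hn, rfl⟩
    rcases mem_Tf_iff.1 hn with ⟨s, hs, rfl⟩ | ⟨z, hz, rfl⟩
    · exact Or.inl ⟨s, by push_cast; ring, (zmem_coe S s).2 hs⟩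
    · exact Or.inr ⟨z, by push_cast; ring, hz⟩
  · rintro (⟨y, rfl, hy⟩ | ⟨z, rfl, hz⟩)
    · obtain ⟨m, hm, rfl⟩ := hy
      exact ⟨2 * m, mem_Tf_iff.2 (Or.inl ⟨m, hm, rfl⟩), by push_cast; ring⟩
    · exact ⟨2 * z + f, mem_Tf_iff.2 (Or.inr ⟨z, hz, rfl⟩), by push_cast; ring⟩

lemma two_mul_mem_Tf_iff {x : ℕ} : 2 * x ∈ Tf S hS f hf hfg ↔ x ∈ S := by
  rw [mem_Tf_iff]
  constructor
  · rintro (⟨s, hs, he⟩ | ⟨z, _, he⟩)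
    · have : x = s := by omega
      exact this ▸ hs
    · exfalso; obtain ⟨k, hk⟩ := id hf; omega
  · exact fun h => Or.inl ⟨x, h, rfl⟩

lemma zmem_Tf_of_lt {x : ℤ} (hx : 2 * frobeniusNumber S + f < x) :
    (Tf S hS f hf hfg).zmem x := by
  rw [zmem_Tf_iff]
  have hg := neg_one_le_frobenius hS
  rcases Int.even_or_odd x with ⟨y, hy⟩ | ⟨y, hy⟩
  · refine Or.inl ⟨y, by omega, zmem_of_frobenius_lt hS (by omega)⟩
  · -- x = 2y+1 odd; f odd so x = 2z + f with z = y - (f-1)/2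
    obtain ⟨k, hk⟩ := id hf
    have hz : x = 2 * (y - k) + f := by push_cast; omega
    have hynn : 0 ≤ y - k := by omega
    refine Or.inr ⟨(y - k).toNat, ?_, ?_⟩
    · rw [Int.toNat_of_nonneg hynn]
      exact hz
    · rw [Int.toNat_of_nonneg hynn]
      apply not_zmem_neg S
      omega

lemma not_zmem_Tf_top : ¬ (Tf S hS f hf hfg).zmem (2 * frobeniusNumber S + f) := by
  rw [zmem_Tf_iff]
  obtain ⟨k, hk⟩ := id hf
  rintro (⟨y, hy, -⟩ | ⟨z, hz, hnz⟩)
  · omega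
  · have : (z : ℤ) = frobeniusNumber S := by omega
    rw [this] at hnz
    exact hnz (by simpa using (zmem_coe S 0).2 S.zero_mem)

lemma frobenius_Tf : frobeniusNumber (Tf S hS f hf hfg) = 2 * frobeniusNumber S + f := by
  rw [frobeniusNumber]
  have hgr : IsGreatest {x : ℤ | ¬ (Tf S hS f hf hfg).zmem x} (2 * frobeniusNumber S + f) := by
    refine ⟨not_zmem_Tf_top, fun z hz => ?_⟩
    by_contra h
    exact hz (zmem_Tf_of_lt (by omega))
  exact hgr.csSup_eq

end Stmt3Aux

namespace Stmt3Aux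

variable {S : AddSubmonoid ℕ} {hS : Cofin S} {f : ℕ} {hf : Odd f}
  {hfg : frobeniusNumber S < (f : ℤ)}

lemma symmetric_Tf (x : ℤ) : ¬ (Tf S hS f hf hfg).zmem x ↔
    (Tf S hS f hf hfg).zmem (frobeniusNumber (Tf S hS f hf hfg) - x) := by
  rw [frobenius_Tf]
  set g := frobeniusNumber S with hg
  have hg1 : (-1 : ℤ) ≤ g := neg_one_le_frobenius hS
  obtain ⟨k, hk⟩ : ∃ k, f = 2 * k + 1 := id hf
  rcases Int.even_or_odd x with ⟨y, hy⟩ | ⟨y, hy⟩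
  · -- x = 2y even; 2g+f-x = 2(g-y)+f odd
    have hL : (Tf S hS f hf hfg).zmem x ↔ S.zmem y := by
      rw [zmem_Tf_iff]
      constructor
      · rintro (⟨y', hy', hsy⟩ | ⟨z, hz, -⟩)
        · have : y = y' := by omega
          exact this ▸ hsy
        · omega
      · exact fun h => Or.inl ⟨y, by omega, h⟩
    have hR : (Tf S hS f hf hfg).zmem (2 * g + f - x) ↔ (0 ≤ g - y ∧ ¬ S.zmem y) := by
      rw [zmem_Tf_iff]
      constructor
      · rintro (⟨y', hy', -⟩ | ⟨z, hz, hnz⟩)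
        · omega
        · have hzy : (z : ℤ) = g - y := by omega
          have : g - (z : ℤ) = y := by omega
          rw [this] at hnz
          exact ⟨by omega, hnz⟩
      · rintro ⟨h1, h2⟩
        refine Or.inr ⟨(g - y).toNat, by omega, ?_⟩
        rwa [Int.toNat_of_nonneg h1, show g - (g - y) = y by ring]
    rw [hL, hR]
    constructor
    · intro h
      refine ⟨?_, h⟩
      by_contra hc
      exact h (zmem_of_frobenius_lt hS (by omega))
    · exact fun h => h.2
  · -- x = 2y+1 odd; write x = 2(y-k)+f, 2g+f-x = 2(g-(y-k)) even
    set z : ℤ := y - k with hzdef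
    have hxz : x = 2 * z + f := by omega
    have hL : (Tf S hS f hf hfg).zmem x ↔ (0 ≤ z ∧ ¬ S.zmem (g - z)) := by
      rw [zmem_Tf_iff]
      constructor
      · rintro (⟨y', hy', -⟩ | ⟨w, hw, hnw⟩)
        · omega
        · have : (w : ℤ) = z := by omega
          rw [this] at hnw
          exact ⟨by omega, hnw⟩
      · rintro ⟨h1, h2⟩
        refine Or.inr ⟨z.toNat, by omega, ?_⟩
        rwa [Int.toNat_of_nonneg h1]
    have hR : (Tf S hS f hf hfg).zmem (2 * g + f - x) ↔ S.zmem (g - z) := by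
      rw [zmem_Tf_iff]
      constructor
      · rintro (⟨y', hy', hsy⟩ | ⟨w, hw, -⟩)
        · have : g - z = y' := by omega
          exact this ▸ hsy
        · omega
      · exact fun h => Or.inl ⟨g - z, by omega, h⟩
    rw [hL, hR]
    constructor
    · intro h
      rcases lt_or_ge z 0 with hz0 | hz0
      · exact zmem_of_frobenius_lt hS (by omega)
      · by_contra hc
        exact h ⟨hz0, hc⟩
    · rintro h ⟨-, h2⟩
      exact h2 h
end Stmt3Aux

namespace Stmt3Aux

variable {S : AddSubmonoid ℕ} {hS : Cofin S} {f : ℕ} {hf : Odd f}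
  {hfg : frobeniusNumber S < (f : ℤ)}

lemma cofin_Tf : (((Tf S hS f hf hfg) : Set ℕ)ᶜ).Finite := by
  apply Set.Finite.subset (Set.finite_Iic (2 * frobeniusNumber S + f).toNat)
  intro n hn
  simp only [Set.mem_compl_iff, SetLike.mem_coe] at hn
  simp only [Set.mem_Iic]
  by_contra h
  have hx : 2 * frobeniusNumber S + f < (n : ℤ) := by
    have := neg_one_le_frobenius hS
    omega
  obtain ⟨m, hm, hme⟩ := zmem_Tf_of_lt (hS := hS) (hf := hf) (hfg := hfg) hx
  have : m = n := by exact_mod_cast hme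
  exact hn (this ▸ hm)

lemma self_mem_Tf : f ∈ Tf S hS f hf hfg := by
  refine mem_Tf_iff.2 (Or.inr ⟨0, ?_, by ring⟩)
  simpa using not_zmem_frobenius hS

lemma odd_mem_Tf_ge {n : ℕ} (hn : n ∈ Tf S hS f hf hfg) (hodd : Odd n) : f ≤ n := by
  rcases mem_Tf_iff.1 hn with ⟨s, -, rfl⟩ | ⟨z, -, rfl⟩
  · exact absurd hodd (by simp [Nat.even_iff, Nat.odd_iff, parity_simps])
  · omega

end Stmt3Aux


open Stmt3Aux

/-- for every numerical semigroup `S`, the set of symmetric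
numerical semigroups `T` with `S = T/2 = {x ∈ ℕ : 2x ∈ T}` is infinite. -/
theorem stmt3 (S : AddSubmonoid ℕ) (hS : ((S : Set ℕ)ᶜ).Finite) :
    {T : AddSubmonoid ℕ | ((T : Set ℕ)ᶜ).Finite ∧
      (∀ x : ℤ, ¬ T.zmem x ↔ T.zmem (frobeniusNumber T - x)) ∧
      (∀ x : ℕ, x ∈ S ↔ 2 * x ∈ T)}.Infinite := by
  have hS' : Cofin S := hS
  set g := frobeniusNumber S with hg
  have hg1 : (-1 : ℤ) ≤ g := neg_one_le_frobenius hS'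
  -- family of odd numbers bigger than g
  have hFodd : ∀ k : ℕ, Odd (2 * (g.toNat + k) + 1) := fun k => ⟨g.toNat + k, rfl⟩
  have hFg : ∀ k : ℕ, g < ((2 * (g.toNat + k) + 1 : ℕ) : ℤ) := by
    intro k
    have h1 : g ≤ (g.toNat : ℤ) := Int.self_le_toNat g
    push_cast
    omega
  refine Set.infinite_of_injective_forall_mem
    (f := fun k : ℕ => Tf S hS' (2 * (g.toNat + k) + 1) (hFodd k) (hFg k)) ?_ ?_
  · intro a b hab
    simp only at hab
    have hfa : 2 * (g.toNat + a) + 1 ∈ Tf S hS' (2 * (g.toNat + b) + 1) (hFodd b) (hFg b) :=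
      hab ▸ self_mem_Tf
    have hfb : 2 * (g.toNat + b) + 1 ∈ Tf S hS' (2 * (g.toNat + a) + 1) (hFodd a) (hFg a) :=
      hab ▸ self_mem_Tf
    have h1 := odd_mem_Tf_ge hfa (hFodd a)
    have h2 := odd_mem_Tf_ge hfb (hFodd b)
    omega
  · intro k
    refine ⟨cofin_Tf, fun x => symmetric_Tf x, fun x => (two_mul_mem_Tf_iff (x := x)).symm⟩
end

section
/- Let K be a field and let S = ⟨n_1,n_2,n_3⟩ be a numerical semigroup minimally generated by n_1 < n_2 < n_3 with gcd(n_1,n_2,n_3)=1 which is not symmetric. Let φ : K[X,Y,Z] → K[t] be the K-algebra homomorphism with φ(X)=t^{n_1}, φ(Y)=t^{n_2}, φ(Z)=t^{n_3}, and let I_S = ker φ. Then there exist positive integers a,b,c,d,e,f such that I_S is generated by the three maximal minors of the matrix ((X^a, Y^b, Z^c),(Z^d, X^e, Y^f)), namely by X^{a+e} − Y^bZ^d, X^aY^f − Z^{c+d}, and Y^{b+f} − X^eZ^c. -/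
namespace AddSubmonoid

def IsSymmetric (S : AddSubmonoid ℕ) : Prop :=
  ∀ t : ℤ, ¬ S.zmem t ↔ S.zmem (frobeniusNumber S - t)

theorem isSymmetric_of_zmem_sub {S : AddSubmonoid ℕ} {F : ℤ} (hF : ¬ S.zmem F)
    (h : ∀ t, ¬ S.zmem t → S.zmem (F - t)) : S.IsSymmetric := by
  have hF' : frobeniusNumber S = F :=
    IsGreatest.csSup_eq ⟨hF, fun t ht => by obtain ⟨n, -, hn⟩ := h t ht; omega⟩
  intro t
  rw [hF']
  exact ⟨h t, fun ⟨n, hn, hnt⟩ ⟨n', hn', hnt'⟩ => hF ⟨n' + n, add_mem hn' hn, by push_cast; omega⟩⟩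

theorem mem_closure_triple {x y z s : ℕ} :
    s ∈ closure {x, y, z} ↔ ∃ p q r, p * x + q * y + r * z = s := by
  simp only [Set.insert_eq x, closure_union, mem_sup, mem_closure_singleton, mem_closure_pair,
    smul_eq_mul]
  constructor
  · rintro ⟨-, ⟨p, rfl⟩, -, ⟨q, r, rfl⟩, rfl⟩
    exact ⟨p, q, r, by ring⟩
  · rintro ⟨p, q, r, rfl⟩
    exact ⟨_, ⟨p, rfl⟩, _, ⟨q, r, rfl⟩, by ring⟩

theorem zmem_closure_triple {x y z : ℕ} {t : ℤ} :
    (closure {x, y, z}).zmem t ↔ ∃ p q r : ℕ, (p : ℤ) * x + q * y + r * z = t := by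
  simp only [zmem, mem_closure_triple]
  constructor
  · rintro ⟨-, ⟨p, q, r, rfl⟩, rfl⟩
    exact ⟨p, q, r, by push_cast; ring⟩
  · rintro ⟨p, q, r, rfl⟩
    exact ⟨_, ⟨p, q, r, rfl⟩, by push_cast; ring⟩

theorem closure_rotate (x y z : ℕ) :
    closure ({y, z, x} : Set ℕ) = closure {x, y, z} := by
  rw [Set.insert_comm, Set.pair_comm, Set.insert_comm, Set.pair_comm]

theorem closure_swap (x y z : ℕ) :
    closure ({x, z, y} : Set ℕ) = closure {x, y, z} := by
  rw [Set.pair_comm]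

end AddSubmonoid

theorem exists_forall_ge_mem_closure_triple {x y z : ℕ} (h : Nat.gcd x (Nat.gcd y z) = 1) :
    ∃ N, ∀ n ≥ N, n ∈ AddSubmonoid.closure {x, y, z} := by
  obtain ⟨N, hN⟩ := Nat.exists_mem_closure_of_ge {x, y, z}
  have hdvd : Nat.setGcd {x, y, z} ∣ 1 := h ▸ Nat.dvd_gcd (Nat.setGcd_dvd_of_mem (by simp))
    (Nat.dvd_gcd (Nat.setGcd_dvd_of_mem (by simp)) (Nat.setGcd_dvd_of_mem (by simp)))
  exact ⟨N, fun n hn => hN n hn (hdvd.trans (one_dvd n))⟩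

def IsMinMultiple (x y z c : ℕ) : Prop :=
  IsLeast {k | 0 < k ∧ ∃ α β, k * x = α * y + β * z} c

namespace IsMinMultiple

variable {x y z c : ℕ}

theorem exists_of_pos (hy : 0 < y) : ∃ c, IsMinMultiple x y z c :=
  ⟨_, Nat.sInf_mem ⟨y, hy, x, 0, by ring⟩, fun _ hk => Nat.sInf_le hk⟩

theorem pos (h : IsMinMultiple x y z c) : 0 < c := h.1.1

theorem exists_eq (h : IsMinMultiple x y z c) : ∃ α β, c * x = α * y + β * z := h.1.2

theorem le {k α β : ℕ} (h : IsMinMultiple x y z c) (hk : 0 < k) (hrel : k * x = α * y + β * z) :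
    c ≤ k :=
  h.2 ⟨hk, α, β, hrel⟩

theorem le_of_pos {k α β : ℕ} (h : IsMinMultiple x y z c) (hrel : k * x = α * y + β * z)
    (hpos : 0 < α * y + β * z) : c ≤ k :=
  h.le (Nat.pos_of_mul_pos_right (hrel ▸ hpos)) hrel

theorem swap (h : IsMinMultiple x y z c) : IsMinMultiple x z y c :=
  ⟨⟨h.pos, by obtain ⟨α, β, hc⟩ := h.exists_eq; exact ⟨β, α, by rw [hc, add_comm]⟩⟩,
    fun _ ⟨hk, α, β, hrel⟩ => h.le hk (hrel.trans (add_comm _ _))⟩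

end IsMinMultiple

section Apery

variable {x y z u v w : ℕ}

theorem exists_eq_add_lt (hv : 0 < v) (hw : IsMinMultiple z x y w) (huv : u * x = v * y)
    (p q r : ℕ) :
    ∃ p' q' r', p * x + q * y + r * z = p' * x + q' * y + r' * z ∧ q' < v ∧ r' < w := by
  obtain ⟨s₁, s₂, hs⟩ := hw.exists_eq
  have hr := Nat.div_add_mod r w
  have hq := Nat.div_add_mod (q + r / w * s₂) v
  refine ⟨p + r / w * s₁ + (q + r / w * s₂) / v * u, (q + r / w * s₂) % v, r % w, ?_,
    Nat.mod_lt _ hv, Nat.mod_lt _ hw.pos⟩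
  linear_combination z * hr.symm + y * hq.symm + r / w * hs + (q + r / w * s₂) / v * huv.symm

theorem eq_zero_of_add_eq_of_lt (hy : 0 < y) (hz : 0 < z) (hu : IsMinMultiple x y z u)
    (hv : IsMinMultiple y z x v) (hw : IsMinMultiple z x y w) (huv : u * x = v * y)
    {α q r q' r' : ℕ} (hq : q < v) (hr : r < w) (h : α * x + q' * y + r' * z = q * y + r * z) :
    α = 0 := by
  by_contra hα
  rcases le_or_gt q' q with hqq | hqq <;> rcases le_or_gt r' r with hrr | hrr
  · obtain ⟨dq, rfl⟩ := Nat.exists_eq_add_of_le hqq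
    obtain ⟨dr, rfl⟩ := Nat.exists_eq_add_of_le hrr
    obtain ⟨e, rfl⟩ :=
      Nat.exists_eq_add_of_le (hu.le (α := dq) (β := dr) (Nat.pos_of_ne_zero hα) (by linarith))
    obtain ⟨g, rfl⟩ := Nat.exists_eq_add_of_lt (show dq < v by omega)
    have hdr : dr * z = e * x + (g + 1) * y := by linarith
    have := hw.le_of_pos hdr (by positivity)
    omega
  · obtain ⟨dq, rfl⟩ := Nat.exists_eq_add_of_le hqq
    obtain ⟨dr, rfl⟩ := Nat.exists_eq_add_of_lt hrr
    have hdq : dq * y = (dr + 1) * z + α * x := by linarith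
    have := hv.le_of_pos hdq (by positivity)
    omega
  · obtain ⟨dq, rfl⟩ := Nat.exists_eq_add_of_lt hqq
    obtain ⟨dr, rfl⟩ := Nat.exists_eq_add_of_le hrr
    have hdr : dr * z = α * x + (dq + 1) * y := by linarith
    have := hw.le_of_pos hdr (by positivity)
    omega
  · nlinarith

theorem exists_int_eq_add_lt (hcof : ∃ N, ∀ n ≥ N, n ∈ AddSubmonoid.closure {x, y, z})
    (hx : 0 < x) (hv : 0 < v) (hw : IsMinMultiple z x y w) (huv : u * x = v * y) (t : ℤ) :
    ∃ k : ℤ, ∃ q < v, ∃ r < w, t = k * x + q * y + r * z := by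
  obtain ⟨N, hN⟩ := hcof
  obtain ⟨K, hK⟩ : ∃ K : ℕ, (N : ℤ) ≤ t + K * x := by
    have hx1 : (1 : ℤ) ≤ x := by exact_mod_cast hx
    refine ⟨N + t.natAbs, ?_⟩
    push_cast
    nlinarith [neg_abs_le t,
      mul_nonneg (add_nonneg N.cast_nonneg (abs_nonneg t)) (sub_nonneg.2 hx1)]
  obtain ⟨p, q, r, hpqr⟩ := AddSubmonoid.mem_closure_triple.1 (hN (t + K * x).toNat (by omega))
  obtain ⟨p', q', r', he, hq', hr'⟩ := exists_eq_add_lt hv hw huv p q r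
  refine ⟨p' - K, q', hq', r', hr', ?_⟩
  have hpqr' := congrArg (Nat.cast : ℕ → ℤ) (he.symm.trans hpqr)
  push_cast at hpqr'
  rw [Int.toNat_of_nonneg (by omega)] at hpqr'
  linarith

theorem isSymmetric_of_minMultiple_eq {S : AddSubmonoid ℕ} (hS : S = AddSubmonoid.closure {x, y, z})
    (hcof : ∃ N, ∀ n ≥ N, n ∈ S) (hx : 0 < x) (hy : 0 < y) (hz : 0 < z)
    (hu : IsMinMultiple x y z u) (hv : IsMinMultiple y z x v) (hw : IsMinMultiple z x y w)
    (huv : u * x = v * y) : S.IsSymmetric := by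
  subst hS
  obtain ⟨V, rfl⟩ : ∃ V, v = V + 1 := ⟨v - 1, by have := hv.pos; omega⟩
  obtain ⟨W, rfl⟩ : ∃ W, w = W + 1 := ⟨w - 1, by have := hw.pos; omega⟩
  refine AddSubmonoid.isSymmetric_of_zmem_sub (F := V * y + W * z - x) ?_ fun t ht => ?_
  · rw [AddSubmonoid.zmem_closure_triple]
    rintro ⟨p, q, r, h⟩
    obtain ⟨p', q', r', he, -, -⟩ := exists_eq_add_lt (by omega) hw huv p q r
    have h' : (p' + 1) * x + q' * y + r' * z = V * y + W * z := by
      zify at he ⊢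
      linarith
    exact absurd (eq_zero_of_add_eq_of_lt hy hz hu hv hw huv (by omega) (by omega) h') (by omega)
  · obtain ⟨k, q, hq, r, hr, rfl⟩ := exists_int_eq_add_lt hcof hx (by omega) hw huv t
    have hk : k < 0 := by
      by_contra! hk
      exact ht (AddSubmonoid.zmem_closure_triple.2 ⟨k.toNat, q, r, by rw [Int.toNat_of_nonneg hk]⟩)
    refine AddSubmonoid.zmem_closure_triple.2 ⟨(-k - 1).toNat, V - q, W - r, ?_⟩
    rw [Int.toNat_of_nonneg (by omega), Nat.cast_sub (by omega), Nat.cast_sub (by omega)]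
    ring

end Apery

section Degenerate

variable {x y z cx cy cz : ℕ}

theorem IsMinMultiple.mul_le_of_eq_mul {m : ℕ} (hx : 0 < x) (hcx : IsMinMultiple x y z cx)
    (hcy : IsMinMultiple y z x cy) (h : cx * x = m * y) :
    cy * y ≤ cx * x ∧ (cy * y = cx * x ∨ ∃ β, cy * y = β * z) := by
  have hm : cy ≤ m := hcy.le_of_pos (α := 0) (β := cx) (by rw [← h]; ring)
    (by have := hcx.pos; positivity)
  have hle : cy * y ≤ cx * x := h ▸ Nat.mul_le_mul_right y hm
  refine ⟨hle, ?_⟩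
  obtain ⟨β, α, hrep⟩ := hcy.exists_eq
  rcases Nat.eq_zero_or_pos α with rfl | hα
  · exact Or.inr ⟨β, by simpa using hrep⟩
  have hαcx : α ≤ cx := Nat.le_of_mul_le_mul_right (by linarith [Nat.zero_le (β * z)]) hx
  rcases hαcx.lt_or_eq with hlt | rfl
  · obtain ⟨D, rfl⟩ := Nat.exists_eq_add_of_lt hlt
    obtain ⟨E, rfl⟩ := Nat.exists_eq_add_of_le hm
    have := hcx.le (α := E) (β := β) (Nat.succ_pos D) (by linarith)
    omega
  · exact Or.inl (le_antisymm hle (by linarith [Nat.zero_le (β * z)]))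

variable {S : AddSubmonoid ℕ}

theorem isSymmetric_of_minMultiple_eq_mul {m : ℕ} (hS : S = AddSubmonoid.closure {x, y, z})
    (hcof : ∃ N, ∀ n ≥ N, n ∈ S) (hx : 0 < x) (hy : 0 < y) (hz : 0 < z)
    (hcx : IsMinMultiple x y z cx) (hcy : IsMinMultiple y z x cy) (hcz : IsMinMultiple z x y cz)
    (h : cx * x = m * y) : S.IsSymmetric := by
  obtain ⟨hxy, hxy' | ⟨β, hβ⟩⟩ := hcx.mul_le_of_eq_mul hx hcy h
  · exact isSymmetric_of_minMultiple_eq hS hcof hx hy hz hcx hcy hcz hxy'.symm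
  obtain ⟨hyz, hyz' | ⟨γ, hγ⟩⟩ := hcy.mul_le_of_eq_mul hy hcz hβ
  · exact isSymmetric_of_minMultiple_eq (hS.trans (AddSubmonoid.closure_rotate x y z).symm) hcof
      hy hz hx hcy hcz hcx hyz'.symm
  have hzx := (hcz.mul_le_of_eq_mul hz hcx hγ).1
  exact isSymmetric_of_minMultiple_eq hS hcof hx hy hz hcx hcy hcz (by omega)

theorem pos_of_not_isSymmetric {b d : ℕ} (hS : S = AddSubmonoid.closure {x, y, z})
    (hcof : ∃ N, ∀ n ≥ N, n ∈ S) (hx : 0 < x) (hy : 0 < y) (hz : 0 < z)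
    (hcx : IsMinMultiple x y z cx) (hcy : IsMinMultiple y z x cy) (hcz : IsMinMultiple z x y cz)
    (hsym : ¬ S.IsSymmetric) (h : cx * x = b * y + d * z) : 0 < b ∧ 0 < d := by
  refine ⟨Nat.pos_of_ne_zero fun hb => hsym ?_, Nat.pos_of_ne_zero fun hd => hsym ?_⟩
  · exact isSymmetric_of_minMultiple_eq_mul (hS.trans (AddSubmonoid.closure_swap x y z).symm)
      hcof hx hz hy hcx.swap hcz.swap hcy.swap (m := d) (by simpa [hb] using h)
  · exact isSymmetric_of_minMultiple_eq_mul hS hcof hx hy hz hcx hcy hcz (m := b)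
      (by simpa [hd] using h)

end Degenerate

theorem IsMinMultiple.lt_of_eq {x y z c Q R k A B : ℕ} (hz : 0 < z) (h : IsMinMultiple x y z c)
    (hrel : c * x = Q * y + R * z) (hk : k * y = A * x + B * z) (hA : 0 < A) (hB : 0 < B) :
    Q < k := by
  by_contra! hkQ
  obtain ⟨E, rfl⟩ := Nat.exists_eq_add_of_le hkQ
  have hAc : A < c := Nat.lt_of_mul_lt_mul_right (a := x) (by nlinarith)
  obtain ⟨D, rfl⟩ := Nat.exists_eq_add_of_lt hAc
  have := h.le (α := E) (β := R + B) (Nat.succ_pos D) (by linarith)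
  omega

theorem IsMinMultiple.le_add {x y z c₁ c₂ c₃ a c e f : ℕ} (hx : 0 < x)
    (h₁ : IsMinMultiple x y z c₁) (h₂ : IsMinMultiple y z x c₂) (h₃ : IsMinMultiple z x y c₃)
    (hr₂ : c₂ * y = c * z + e * x) (hr₃ : c₃ * z = a * x + f * y)
    (ha : 0 < a) (hc : 0 < c) (he : 0 < e) (hf : 0 < f) : c₁ ≤ a + e := by
  have hfc₂ : f < c₂ := h₃.swap.lt_of_eq hx (hr₃.trans (add_comm _ _)) hr₂ hc he
  have hcc₃ : c < c₃ := h₂.lt_of_eq hx hr₂ (hr₃.trans (add_comm _ _)) hf ha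
  obtain ⟨g, rfl⟩ := Nat.exists_eq_add_of_lt hfc₂
  obtain ⟨g', rfl⟩ := Nat.exists_eq_add_of_lt hcc₃
  exact h₁.le (α := g + 1) (β := g' + 1) (by omega) (by linarith)

theorem exists_minMultiple_eq_add_of_not_isSymmetric {x y z : ℕ} {S : AddSubmonoid ℕ}
    (hx : 0 < x) (hy : 0 < y) (hz : 0 < z) (hS : S = AddSubmonoid.closure {x, y, z})
    (hcof : ∃ N, ∀ n ≥ N, n ∈ S) (hsym : ¬ S.IsSymmetric) :
    ∃ a b c d e f : ℕ, 0 < a ∧ 0 < b ∧ 0 < c ∧ 0 < d ∧ 0 < e ∧ 0 < f ∧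
      (a + e) * x = b * y + d * z ∧ (b + f) * y = c * z + e * x ∧ (c + d) * z = a * x + f * y ∧
      IsMinMultiple x y z (a + e) ∧ IsMinMultiple y z x (b + f) ∧ IsMinMultiple z x y (c + d) := by
  obtain ⟨c₁, h₁⟩ := IsMinMultiple.exists_of_pos (x := x) (z := z) hy
  obtain ⟨c₂, h₂⟩ := IsMinMultiple.exists_of_pos (x := y) (z := x) hz
  obtain ⟨c₃, h₃⟩ := IsMinMultiple.exists_of_pos (x := z) (z := y) hx
  obtain ⟨b, d, hr₁⟩ := h₁.exists_eq
  obtain ⟨c, e, hr₂⟩ := h₂.exists_eq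
  obtain ⟨a, f, hr₃⟩ := h₃.exists_eq
  have hS₂ := hS.trans (AddSubmonoid.closure_rotate x y z).symm
  have hS₃ := hS₂.trans (AddSubmonoid.closure_rotate y z x).symm
  obtain ⟨hb, hd⟩ := pos_of_not_isSymmetric hS hcof hx hy hz h₁ h₂ h₃ hsym hr₁
  obtain ⟨hc, he⟩ := pos_of_not_isSymmetric hS₂ hcof hy hz hx h₂ h₃ h₁ hsym hr₂
  obtain ⟨ha, hf⟩ := pos_of_not_isSymmetric hS₃ hcof hz hx hy h₃ h₁ h₂ hsym hr₃
  have hle₁ := Nat.mul_le_mul_right x (h₁.le_add hx h₂ h₃ hr₂ hr₃ ha hc he hf)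
  have hle₂ := Nat.mul_le_mul_right y (h₂.le_add hy h₃ h₁ hr₃ hr₁ hb ha hf hd)
  have hle₃ := Nat.mul_le_mul_right z (h₃.le_add hz h₁ h₂ hr₁ hr₂ hc hb hd he)
  obtain rfl : c₁ = a + e := Nat.eq_of_mul_eq_mul_right hx (by linarith)
  obtain rfl : c₂ = b + f := Nat.eq_of_mul_eq_mul_right hy (by linarith)
  obtain rfl : c₃ = c + d := Nat.eq_of_mul_eq_mul_right hz (by linarith)
  exact ⟨a, b, c, d, e, f, ha, hb, hc, hd, he, hf, hr₁, hr₂, hr₃, h₁, h₂, h₃⟩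

open MvPolynomial Finsupp

section Toric

variable {σ R : Type*}

theorem aeval_X_pow_monomial [CommSemiring R] (w : σ → ℕ) (m : σ →₀ ℕ) (r : R) :
    aeval (fun i => (Polynomial.X : Polynomial R) ^ w i) (monomial m r) =
      Polynomial.monomial (weight w m) r := by
  simp only [aeval_monomial, ← pow_mul, Finsupp.prod, Finset.prod_pow_eq_pow_sum,
    Polynomial.algebraMap_eq, Polynomial.C_mul_X_pow_eq_monomial, weight_apply,
    Finsupp.sum, smul_eq_mul, mul_comm (w _)]

variable [CommRing R]

theorem ker_aeval_X_pow_le (w : σ → ℕ) (J : Ideal (MvPolynomial σ R))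
    (hJ : ∀ m m' : σ →₀ ℕ, weight w m = weight w m' →
      Ideal.Quotient.mk J (monomial m 1) = Ideal.Quotient.mk J (monomial m' 1)) :
    RingHom.ker (aeval fun i => (Polynomial.X : Polynomial R) ^ w i) ≤ J := by
  classical
  -- `L (t ^ v)` is the class of some monomial of weight `v`; all of them agree by `hJ`, so
  -- `L ∘ aeval` is the quotient map and kills the kernel.
  let L : Polynomial R →ₗ[R] MvPolynomial σ R ⧸ J := (Polynomial.basisMonomials R).constr R
    fun v => if h : ∃ m, weight w m = v then Ideal.Quotient.mk J (monomial h.choose 1) else 0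
  have hL : L ∘ₗ (aeval fun i => (Polynomial.X : Polynomial R) ^ w i).toLinearMap =
      (Ideal.Quotient.mkₐ R J).toLinearMap := by
    refine (basisMonomials σ R).ext fun m => ?_
    have h : ∃ m', weight w m' = weight w m := ⟨m, rfl⟩
    have hb : Polynomial.monomial (weight w m) (1 : R) =
        Polynomial.basisMonomials R (weight w m) := by simp
    simp only [coe_basisMonomials, LinearMap.comp_apply, AlgHom.toLinearMap_apply,
      aeval_X_pow_monomial, Ideal.Quotient.mkₐ_eq_mk, L, hb, Module.Basis.constr_basis, dif_pos h]
    exact hJ _ _ h.choose_spec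
  intro F hF
  rw [← Ideal.Quotient.eq_zero_iff_mem, ← Ideal.Quotient.mkₐ_eq_mk R, ← AlgHom.toLinearMap_apply,
    ← hL, LinearMap.comp_apply, AlgHom.toLinearMap_apply, RingHom.mem_ker.1 hF, map_zero]

theorem eq_zero_of_weight_eq_zero {w : σ → ℕ} (hw : ∀ i, 0 < w i) {m : σ →₀ ℕ}
    (h : weight w m = 0) : m = 0 := by
  ext i
  by_contra hi
  have := le_weight_of_ne_zero' w hi
  have := hw i
  omega

theorem mk_monomial_eq_of_sub_single {J : Ideal (MvPolynomial σ R)} {m m' : σ →₀ ℕ} {j : σ}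
    (hj : m j ≠ 0) (hj' : m' j ≠ 0)
    (h : Ideal.Quotient.mk J (monomial (m - single j 1) 1) =
      Ideal.Quotient.mk J (monomial (m' - single j 1) 1)) :
    Ideal.Quotient.mk J (monomial m 1) = Ideal.Quotient.mk J (monomial m' 1) := by
  rw [← sub_add_single_one_cancel hj, ← sub_add_single_one_cancel hj', monomial_add_single,
    monomial_add_single, map_mul, map_mul, h]

-- `x_i ^ k = x_i ^ (k - c_i) * x_i ^ c_i` is congruent to `x_i ^ (k - c_i) * B_i`, which shares a
-- variable with every nonzero monomial not involving `x_i`.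
theorem mk_monomial_single_eq {w : σ → ℕ} (hw : ∀ i, 0 < w i) {J : Ideal (MvPolynomial σ R)}
    {c : σ → ℕ} {B : σ → σ →₀ ℕ} (hB : ∀ i j, j ≠ i → B i j ≠ 0)
    (hBw : ∀ i, weight w (B i) = c i * w i)
    (hJ : ∀ i, monomial (single i (c i)) 1 - monomial (B i) 1 ∈ J)
    (hc : ∀ i k (m : σ →₀ ℕ), m i = 0 → 0 < k → weight w m = k * w i → c i ≤ k) {v : ℕ}
    (hshare : ∀ {n n' : σ →₀ ℕ} {j}, weight w n = v → weight w n' = v → n j ≠ 0 → n' j ≠ 0 →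
      Ideal.Quotient.mk J (monomial n 1) = Ideal.Quotient.mk J (monomial n' 1))
    {i : σ} {k : ℕ} {n : σ →₀ ℕ} (hk : k * w i = v) (hn : weight w n = v) (hi : n i = 0)
    (hn0 : n ≠ 0) :
    Ideal.Quotient.mk J (monomial (single i k) 1) = Ideal.Quotient.mk J (monomial n 1) := by
  obtain ⟨j, hj⟩ := Finsupp.ne_iff.1 hn0
  have hji : j ≠ i := by rintro rfl; exact hj hi
  have hk0 : k ≠ 0 := by
    rintro rfl
    exact hn0 (eq_zero_of_weight_eq_zero hw (by simpa [← hk] using hn))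
  have hck : c i ≤ k := hc i k n hi (Nat.pos_of_ne_zero hk0) (hn.trans hk.symm)
  calc Ideal.Quotient.mk J (monomial (single i k) 1)
      = Ideal.Quotient.mk J (monomial (single i (k - c i) + B i) 1) := by
        rw [← Nat.sub_add_cancel hck, single_add, Nat.add_sub_cancel, ← mul_one (1 : R),
          ← monomial_mul, ← monomial_mul, map_mul, map_mul, Ideal.Quotient.eq.2 (hJ i)]
    _ = Ideal.Quotient.mk J (monomial n 1) := by
        refine hshare ?_ hn (j := j) (by simp [hB i j hji]) hj
        rw [map_add, weight_single, hBw, smul_eq_mul, ← add_mul, Nat.sub_add_cancel hck, hk]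

theorem mk_monomial_eq_of_weight_eq [Fintype σ] (hσ : Fintype.card σ ≤ 3) {w : σ → ℕ}
    (hw : ∀ i, 0 < w i) {J : Ideal (MvPolynomial σ R)} {c : σ → ℕ} {B : σ → σ →₀ ℕ}
    (hB : ∀ i j, j ≠ i → B i j ≠ 0) (hBw : ∀ i, weight w (B i) = c i * w i)
    (hJ : ∀ i, monomial (single i (c i)) 1 - monomial (B i) 1 ∈ J)
    (hc : ∀ i k (m : σ →₀ ℕ), m i = 0 → 0 < k → weight w m = k * w i → c i ≤ k)
    {m m' : σ →₀ ℕ} (h : weight w m = weight w m') :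
    Ideal.Quotient.mk J (monomial m 1) = Ideal.Quotient.mk J (monomial m' 1) := by
  classical
  induction hv : weight w m using Nat.strong_induction_on generalizing m m' with
  | _ v ih =>
  have share : ∀ {n n' : σ →₀ ℕ} {j}, weight w n = v → weight w n' = v → n j ≠ 0 → n' j ≠ 0 →
      Ideal.Quotient.mk J (monomial n 1) = Ideal.Quotient.mk J (monomial n' 1) := by
    intro n n' j hn hn' hj hj'
    have := weight_sub_single_add (w := w) hj
    have := weight_sub_single_add (w := w) hj'
    have := hw j
    exact mk_monomial_eq_of_sub_single hj hj' (ih _ (by omega) (by omega) rfl)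
  rcases Nat.eq_zero_or_pos v with rfl | hv0
  · rw [eq_zero_of_weight_eq_zero hw hv, eq_zero_of_weight_eq_zero hw (h.symm.trans hv)]
  have hm0 : m ≠ 0 := by rintro rfl; simp at hv; omega
  have hm0' : m' ≠ 0 := by rintro rfl; simp at h; omega
  by_cases hshare : ∃ j, m j ≠ 0 ∧ m' j ≠ 0
  · obtain ⟨j, hj, hj'⟩ := hshare
    exact share hv (h ▸ hv) hj hj'
  push Not at hshare
  -- With at most three variables, one of two disjoint nonempty supports is a singleton.
  have hcard : m.support.card + m'.support.card ≤ 3 := by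
    rw [← Finset.card_union_of_disjoint (Finset.disjoint_left.2 fun j hj hj' =>
      mem_support_iff.1 hj' (hshare j (mem_support_iff.1 hj)))]
    exact (Finset.card_le_univ _).trans hσ
  have : Nonempty σ := ⟨(Finsupp.ne_iff.1 hm0).choose⟩
  rcases le_or_gt m.support.card 1 with h1 | h1
  · obtain ⟨i, k, rfl⟩ := card_support_le_one'.1 h1
    have hk : k ≠ 0 := by rintro rfl; exact hm0 (single_zero i)
    exact mk_monomial_single_eq hw hB hBw hJ hc share (by simpa [weight_single] using hv) (h ▸ hv)
      (by simpa [hk] using hshare i) hm0'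
  · obtain ⟨i, k, rfl⟩ := card_support_le_one'.1 (show m'.support.card ≤ 1 by omega)
    have hk : k ≠ 0 := by rintro rfl; exact hm0' (single_zero i)
    refine (mk_monomial_single_eq hw hB hBw hJ hc share
      (by rw [← hv, h, weight_single, smul_eq_mul]) hv ?_ hm0).symm
    by_contra hm
    simpa [hk] using hshare i hm

theorem ker_aeval_X_pow_eq_span [Fintype σ] (hσ : Fintype.card σ ≤ 3) {w : σ → ℕ}
    (hw : ∀ i, 0 < w i) {c : σ → ℕ} {B : σ → σ →₀ ℕ}
    (hB : ∀ i j, j ≠ i → B i j ≠ 0) (hBw : ∀ i, weight w (B i) = c i * w i)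
    (hc : ∀ i k (m : σ →₀ ℕ), m i = 0 → 0 < k → weight w m = k * w i → c i ≤ k) :
    RingHom.ker (aeval fun i => (Polynomial.X : Polynomial R) ^ w i) =
      Ideal.span (Set.range fun i => monomial (single i (c i)) (1 : R) - monomial (B i) 1) := by
  refine le_antisymm (ker_aeval_X_pow_le w _ fun m m' h => mk_monomial_eq_of_weight_eq hσ hw hB hBw
    (fun i => Ideal.subset_span (Set.mem_range_self i)) hc h) ?_
  rw [Ideal.span_le, Set.range_subset_iff]
  intro i
  simp [RingHom.mem_ker, aeval_X_pow_monomial, hBw, weight_single]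

end Toric

theorem ker_aeval_eq_span_minors {K : Type*} [CommRing K] {n₁ n₂ n₃ a b c d e f : ℕ}
    (hn₁ : 0 < n₁) (hn₂ : 0 < n₂) (hn₃ : 0 < n₃)
    (ha : 0 < a) (hb : 0 < b) (hc : 0 < c) (hd : 0 < d) (he : 0 < e) (hf : 0 < f)
    (hr₁ : (a + e) * n₁ = b * n₂ + d * n₃) (hr₂ : (b + f) * n₂ = c * n₃ + e * n₁)
    (hr₃ : (c + d) * n₃ = a * n₁ + f * n₂) (h₁ : IsMinMultiple n₁ n₂ n₃ (a + e))
    (h₂ : IsMinMultiple n₂ n₃ n₁ (b + f)) (h₃ : IsMinMultiple n₃ n₁ n₂ (c + d)) :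
    RingHom.ker (aeval ![Polynomial.X ^ n₁, Polynomial.X ^ n₂, Polynomial.X ^ n₃] :
        MvPolynomial (Fin 3) K →ₐ[K] Polynomial K) =
      Ideal.span {X 0 ^ (a + e) - X 1 ^ b * X 2 ^ d, X 0 ^ a * X 1 ^ f - X 2 ^ (c + d),
        X 1 ^ (b + f) - X 0 ^ e * X 2 ^ c} := by
  set w : Fin 3 → ℕ := ![n₁, n₂, n₃]
  set C : Fin 3 → ℕ := ![a + e, b + f, c + d]
  set B : Fin 3 → Fin 3 →₀ ℕ :=
    ![single 1 b + single 2 d, single 2 c + single 0 e, single 0 a + single 1 f]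
  have hw : ∀ i, 0 < w i := by
    intro i; fin_cases i; exacts [hn₁, hn₂, hn₃]
  have hB : ∀ i j, j ≠ i → B i j ≠ 0 := by
    intro i j hji
    fin_cases i <;> fin_cases j <;>
      simp [B, ha.ne', hb.ne', hc.ne', hd.ne', he.ne', hf.ne'] at hji ⊢
  have hBw : ∀ i, weight w (B i) = C i * w i := by
    intro i; fin_cases i <;> simp [B, C, w, weight_single]
    exacts [hr₁.symm, hr₂.symm, hr₃.symm]
  have hC : ∀ i k (m : Fin 3 →₀ ℕ), m i = 0 → 0 < k → weight w m = k * w i → C i ≤ k := by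
    intro i k m hi hk hm
    fin_cases i <;> simp [C, w, weight_eq_sum, Fin.sum_univ_three] at hi hm ⊢
    · exact h₁.le hk (α := m 1) (β := m 2) (by simp [hi] at hm; linarith)
    · exact h₂.le hk (α := m 2) (β := m 0) (by simp [hi] at hm; linarith)
    · exact h₃.le hk (α := m 0) (β := m 1) (by simp [hi] at hm; linarith)
  have hg : (fun i => monomial (single i (C i)) (1 : K) - monomial (B i) 1) =
      ![X 0 ^ (a + e) - X 1 ^ b * X 2 ^ d, X 1 ^ (b + f) - X 0 ^ e * X 2 ^ c,
        -(X 0 ^ a * X 1 ^ f - X 2 ^ (c + d))] := by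
    ext i : 1
    fin_cases i <;> simp [B, C, X_pow_eq_monomial, monomial_mul, add_comm]
  have hX : ![(Polynomial.X : Polynomial K) ^ n₁, Polynomial.X ^ n₂, Polynomial.X ^ n₃] =
      fun i => Polynomial.X ^ w i := by
    ext i : 1; fin_cases i <;> rfl
  rw [hX, ker_aeval_X_pow_eq_span (by simp) hw hB hBw hC, hg, Matrix.range_cons,
    Matrix.range_cons, Matrix.range_cons, Matrix.range_empty, Set.union_empty,
    Set.singleton_union, Set.singleton_union, Ideal.span_insert, Ideal.span_insert,
    Ideal.span_singleton_neg, ← Ideal.span_insert, ← Ideal.span_insert, Set.pair_comm]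

theorem stmt7_general (K : Type*) [Field K] (n₁ n₂ n₃ : ℕ)
    (h1 : 0 < n₁) (h12 : n₁ < n₂) (h23 : n₂ < n₃)
    (hgcd : Nat.gcd n₁ (Nat.gcd n₂ n₃) = 1)
    (S : AddSubmonoid ℕ) (hS : S = AddSubmonoid.closure {n₁, n₂, n₃})
    (hnotsym : ¬ ∀ x : ℤ, ¬ S.zmem x ↔ S.zmem (frobeniusNumber S - x))
    (φ : MvPolynomial (Fin 3) K →ₐ[K] Polynomial K)
    (hφ : φ = aeval ![Polynomial.X ^ n₁, Polynomial.X ^ n₂, Polynomial.X ^ n₃]) :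
    ∃ a b c d e f : ℕ, 0 < a ∧ 0 < b ∧ 0 < c ∧ 0 < d ∧ 0 < e ∧ 0 < f ∧
      RingHom.ker (φ : MvPolynomial (Fin 3) K →+* Polynomial K) =
        Ideal.span {X 0 ^ (a + e) - X 1 ^ b * X 2 ^ d,
                    X 0 ^ a * X 1 ^ f - X 2 ^ (c + d),
                    X 1 ^ (b + f) - X 0 ^ e * X 2 ^ c} := by
  have h2 : 0 < n₂ := h1.trans h12
  have h3 : 0 < n₃ := h2.trans h23
  obtain ⟨a, b, c, d, e, f, ha, hb, hc, hd, he, hf, hr₁, hr₂, hr₃, hmin₁, hmin₂, hmin₃⟩ :=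
    exists_minMultiple_eq_add_of_not_isSymmetric h1 h2 h3 hS
      (hS ▸ exists_forall_ge_mem_closure_triple hgcd) hnotsym
  subst hφ
  exact ⟨a, b, c, d, e, f, ha, hb, hc, hd, he, hf,
    ker_aeval_eq_span_minors h1 h2 h3 ha hb hc hd he hf hr₁ hr₂ hr₃ hmin₁ hmin₂ hmin₃⟩

open MvPolynomial in
/-- for `S = ⟨n₁,n₂,n₃⟩` minimally generated and not symmetric,
the toric ideal `I_S = ker (K[X,Y,Z] → K[t])` is generated by the maximal
minors of a matrix `((X^a, Y^b, Z^c), (Z^d, X^e, Y^f))` with positive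
exponents. -/
theorem stmt7 (K : Type*) [Field K] (n₁ n₂ n₃ : ℕ)
    (h1 : 0 < n₁) (h12 : n₁ < n₂) (h23 : n₂ < n₃)
    (hgcd : Nat.gcd n₁ (Nat.gcd n₂ n₃) = 1)
    (hmin1 : n₁ ∉ AddSubmonoid.closure {n₂, n₃})
    (hmin2 : n₂ ∉ AddSubmonoid.closure {n₁, n₃})
    (hmin3 : n₃ ∉ AddSubmonoid.closure {n₁, n₂})
    (S : AddSubmonoid ℕ) (hS : S = AddSubmonoid.closure {n₁, n₂, n₃})
    (hnotsym : ¬ ∀ x : ℤ, ¬ S.zmem x ↔ S.zmem (frobeniusNumber S - x))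
    (φ : MvPolynomial (Fin 3) K →ₐ[K] Polynomial K)
    (hφ : φ = aeval ![Polynomial.X ^ n₁, Polynomial.X ^ n₂, Polynomial.X ^ n₃]) :
    ∃ a b c d e f : ℕ, 0 < a ∧ 0 < b ∧ 0 < c ∧ 0 < d ∧ 0 < e ∧ 0 < f ∧
      RingHom.ker (φ : MvPolynomial (Fin 3) K →+* Polynomial K) =
        Ideal.span {X 0 ^ (a + e) - X 1 ^ b * X 2 ^ d,
                    X 0 ^ a * X 1 ^ f - X 2 ^ (c + d),
                    X 1 ^ (b + f) - X 0 ^ e * X 2 ^ c} :=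
  stmt7_general K n₁ n₂ n₃ h1 h12 h23 hgcd S hS hnotsym φ hφ
end

section
/- Let K be a field and let S = ⟨n_1,n_2,n_3⟩ be a numerical semigroup minimally generated by n_1 < n_2 < n_3 with gcd(n_1,n_2,n_3)=1 which is not symmetric. For {i,j,k} = {1,2,3} let c_i be the minimal positive integer with c_i n_i ∈ ⟨n_j, n_k⟩, and let r_{i,j}, r_{i,k} be positive integers with c_i n_i = r_{i,j} n_j + r_{i,k} n_k. Let φ : K[X,Y,Z] → K[t] be the K-algebra homomorphism with φ(X)=t^{n_1}, φ(Y)=t^{n_2}, φ(Z)=t^{n_3}, and I_S = ker φ. Then I_S is generated by the three maximal minors of the matrix ((X^{r_{3,1}}, Y^{r_{1,2}}, Z^{r_{2,3}}),(Z^{r_{1,3}}, X^{r_{2,1}}, Y^{r_{3,2}})), namely by X^{r_{2,1}+r_{3,1}} − Y^{r_{1,2}}Z^{r_{1,3}}, X^{r_{3,1}}Y^{r_{3,2}} − Z^{r_{1,3}+r_{2,3}}, and Y^{r_{1,2}+r_{3,2}} − X^{r_{2,1}}Z^{r_{2,3}}. -/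
open MvPolynomial

lemma pairlt (x y z cx cy az ay bz bx : ℕ) (hz : 0 < z)
    (haz : 0 < az) (hay : 0 < ay) (hbz : 0 < bz) (hbx : 0 < bx)
    (hrX : cx * x = az * z + ay * y) (hrY : cy * y = bz * z + bx * x)
    (minX : ∀ c, 0 < c → (∃ p q, c * x = p * z + q * y) → cx ≤ c)
    (minY : ∀ c, 0 < c → (∃ p q, c * y = p * z + q * x) → cy ≤ c) :
    bx < cx ∧ ay < cy := by
  have hne : ¬ (cx ≤ bx ∧ cy ≤ ay) := by
    rintro ⟨h1, h2⟩
    have e1 : ay * y ≥ cy * y := Nat.mul_le_mul_right y h2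
    have e2 : bx * x ≥ cx * x := Nat.mul_le_mul_right x h1
    have e3 : 0 < az * z := Nat.mul_pos haz hz
    have e4 : 0 < bz * z := Nat.mul_pos hbz hz
    omega
  constructor
  · by_contra h
    push_neg at h
    have h2 : ay < cy := by
      by_contra h2; push_neg at h2; exact hne ⟨h, h2⟩
    have key : (cy - ay) * y = (az + bz) * z + (bx - cx) * x := by
      zify [h, le_of_lt h2]; linarith
    have := minY (cy - ay) (by omega) ⟨az + bz, bx - cx, key⟩
    omega
  · by_contra h
    push_neg at h
    have h2 : bx < cx := by
      by_contra h2; push_neg at h2; exact hne ⟨h2, h⟩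
    have key : (cx - bx) * x = (az + bz) * z + (ay - cy) * y := by
      zify [h, le_of_lt h2]; linarith
    have := minX (cx - bx) (by omega) ⟨az + bz, ay - cy, key⟩
    omega

lemma herzogA (n₁ n₂ n₃ c₁ c₂ c₃ r₁₂ r₁₃ r₂₁ r₂₃ r₃₁ r₃₂ : ℕ)
    (hn₁ : 0 < n₁) (hn₂ : 0 < n₂) (hn₃ : 0 < n₃)
    (h12 : 0 < r₁₂) (h13 : 0 < r₁₃) (h21 : 0 < r₂₁)
    (h23 : 0 < r₂₃) (h31 : 0 < r₃₁) (h32 : 0 < r₃₂)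
    (hr₁ : c₁ * n₁ = r₁₂ * n₂ + r₁₃ * n₃)
    (hr₂ : c₂ * n₂ = r₂₁ * n₁ + r₂₃ * n₃)
    (hr₃ : c₃ * n₃ = r₃₁ * n₁ + r₃₂ * n₂)
    (min₁ : ∀ c, 0 < c → (∃ p q, c * n₁ = p * n₂ + q * n₃) → c₁ ≤ c)
    (min₂ : ∀ c, 0 < c → (∃ p q, c * n₂ = p * n₁ + q * n₃) → c₂ ≤ c)
    (min₃ : ∀ c, 0 < c → (∃ p q, c * n₃ = p * n₁ + q * n₂) → c₃ ≤ c) :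
    c₁ = r₂₁ + r₃₁ ∧ c₂ = r₁₂ + r₃₂ ∧ c₃ = r₁₃ + r₂₃ := by
  obtain ⟨i32, i23⟩ := pairlt n₂ n₃ n₁ c₂ c₃ r₂₁ r₂₃ r₃₁ r₃₂ hn₁ h21 h23 h31 h32
    hr₂ hr₃ min₂ (fun c hc ⟨p, q, h⟩ => min₃ c hc ⟨p, q, h⟩)
  obtain ⟨i31, i13⟩ := pairlt n₁ n₃ n₂ c₁ c₃ r₁₂ r₁₃ r₃₂ r₃₁ hn₂ h12 h13 h32 h31
    hr₁ (by linarith) (fun c hc ⟨p, q, h⟩ => min₁ c hc ⟨p, q, h⟩)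
    (fun c hc ⟨p, q, h⟩ => min₃ c hc ⟨q, p, by linarith⟩)
  obtain ⟨i21, i12⟩ := pairlt n₁ n₂ n₃ c₁ c₂ r₁₃ r₁₂ r₂₃ r₂₁ hn₃ h13 h12 h23 h21
    (by linarith) (by linarith)
    (fun c hc ⟨p, q, h⟩ => min₁ c hc ⟨q, p, by linarith⟩)
    (fun c hc ⟨p, q, h⟩ => min₂ c hc ⟨q, p, by linarith⟩)
  have le₁ : c₁ ≤ r₂₁ + r₃₁ := min₁ _ (by omega)
    ⟨c₂ - r₃₂, c₃ - r₂₃, by zify [le_of_lt i32, le_of_lt i23]; linarith⟩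
  have le₂ : c₂ ≤ r₁₂ + r₃₂ := min₂ _ (by omega)
    ⟨c₁ - r₃₁, c₃ - r₁₃, by zify [le_of_lt i31, le_of_lt i13]; linarith⟩
  have le₃ : c₃ ≤ r₁₃ + r₂₃ := min₃ _ (by omega)
    ⟨c₁ - r₂₁, c₂ - r₁₂, by zify [le_of_lt i21, le_of_lt i12]; linarith⟩
  have m1 : c₁ * n₁ ≤ (r₂₁ + r₃₁) * n₁ := Nat.mul_le_mul_right _ le₁
  have m2 : c₂ * n₂ ≤ (r₁₂ + r₃₂) * n₂ := Nat.mul_le_mul_right _ le₂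
  have m3 : c₃ * n₃ ≤ (r₁₃ + r₂₃) * n₃ := Nat.mul_le_mul_right _ le₃
  have sum : c₁ * n₁ + c₂ * n₂ + c₃ * n₃
      = (r₂₁ + r₃₁) * n₁ + (r₁₂ + r₃₂) * n₂ + (r₁₃ + r₂₃) * n₃ := by
    have e1 : (r₂₁ + r₃₁) * n₁ = r₂₁ * n₁ + r₃₁ * n₁ := by ring
    have e2 : (r₁₂ + r₃₂) * n₂ = r₁₂ * n₂ + r₃₂ * n₂ := by ring
    have e3 : (r₁₃ + r₂₃) * n₃ = r₁₃ * n₃ + r₂₃ * n₃ := by ring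
    omega
  refine ⟨Nat.eq_of_mul_eq_mul_right hn₁ (by omega),
    Nat.eq_of_mul_eq_mul_right hn₂ (by omega),
    Nat.eq_of_mul_eq_mul_right hn₃ (by omega)⟩


set_option maxHeartbeats 2000000 in
lemma monoMem (K : Type*) [CommRing K] (n₁ n₂ n₃ r₁₂ r₁₃ r₂₁ r₂₃ r₃₁ r₃₂ : ℕ)
    (hn₁ : 0 < n₁) (hn₂ : 0 < n₂) (hn₃ : 0 < n₃)
    (h12 : 0 < r₁₂) (h13 : 0 < r₁₃) (h21 : 0 < r₂₁)
    (h23 : 0 < r₂₃) (h31 : 0 < r₃₁) (h32 : 0 < r₃₂)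
    (hr₁ : (r₂₁ + r₃₁) * n₁ = r₁₂ * n₂ + r₁₃ * n₃)
    (hr₂ : (r₁₂ + r₃₂) * n₂ = r₂₁ * n₁ + r₂₃ * n₃)
    (hr₃ : (r₁₃ + r₂₃) * n₃ = r₃₁ * n₁ + r₃₂ * n₂)
    (min₁ : ∀ c, 0 < c → (∃ p q, c * n₁ = p * n₂ + q * n₃) → r₂₁ + r₃₁ ≤ c)
    (min₂ : ∀ c, 0 < c → (∃ p q, c * n₂ = p * n₁ + q * n₃) → r₁₂ + r₃₂ ≤ c)
    (min₃ : ∀ c, 0 < c → (∃ p q, c * n₃ = p * n₁ + q * n₂) → r₁₃ + r₂₃ ≤ c) :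
    ∀ (m a b c a' b' c' : ℕ), a * n₁ + b * n₂ + c * n₃ = m →
      a' * n₁ + b' * n₂ + c' * n₃ = m →
      (X 0 ^ a * X 1 ^ b * X 2 ^ c - X 0 ^ a' * X 1 ^ b' * X 2 ^ c'
        : MvPolynomial (Fin 3) K) ∈
        Ideal.span {X 0 ^ (r₂₁ + r₃₁) - X 1 ^ r₁₂ * X 2 ^ r₁₃,
                    X 0 ^ r₃₁ * X 1 ^ r₃₂ - X 2 ^ (r₁₃ + r₂₃),
                    X 1 ^ (r₁₂ + r₃₂) - X 0 ^ r₂₁ * X 2 ^ r₂₃} := by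
  set J : Ideal (MvPolynomial (Fin 3) K) :=
    Ideal.span {X 0 ^ (r₂₁ + r₃₁) - X 1 ^ r₁₂ * X 2 ^ r₁₃,
                X 0 ^ r₃₁ * X 1 ^ r₃₂ - X 2 ^ (r₁₃ + r₂₃),
                X 1 ^ (r₁₂ + r₃₂) - X 0 ^ r₂₁ * X 2 ^ r₂₃} with hJ
  have hg₁ : (X 0 ^ (r₂₁ + r₃₁) - X 1 ^ r₁₂ * X 2 ^ r₁₃ : MvPolynomial (Fin 3) K) ∈ J :=
    Ideal.subset_span (by simp)
  have hg₂ : (X 0 ^ r₃₁ * X 1 ^ r₃₂ - X 2 ^ (r₁₃ + r₂₃) : MvPolynomial (Fin 3) K) ∈ J :=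
    Ideal.subset_span (by simp)
  have hg₃ : (X 1 ^ (r₁₂ + r₃₂) - X 0 ^ r₂₁ * X 2 ^ r₂₃ : MvPolynomial (Fin 3) K) ∈ J :=
    Ideal.subset_span (by simp)
  intro m
  induction m using Nat.strong_induction_on with
  | _ m IH =>
  intro a b c a' b' c' hv hv'
  -- reduction when a shared coordinate is positive
  have hred : ∀ (a b c a' b' c' : ℕ), a * n₁ + b * n₂ + c * n₃ = m →
      a' * n₁ + b' * n₂ + c' * n₃ = m →
      ((0 < a ∧ 0 < a') ∨ (0 < b ∧ 0 < b') ∨ (0 < c ∧ 0 < c')) →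
      (X 0 ^ a * X 1 ^ b * X 2 ^ c - X 0 ^ a' * X 1 ^ b' * X 2 ^ c'
        : MvPolynomial (Fin 3) K) ∈ J := by
    rintro a b c a' b' c' hv hv' (⟨h, h'⟩ | ⟨h, h'⟩ | ⟨h, h'⟩)
    · obtain ⟨a₀, rfl⟩ : ∃ t, a = t + 1 := ⟨a - 1, by omega⟩
      obtain ⟨a₀', rfl⟩ : ∃ t, a' = t + 1 := ⟨a' - 1, by omega⟩
      have hm : m = (a₀ * n₁ + b * n₂ + c * n₃) + n₁ := by rw [← hv]; ring
      have hm' : a₀' * n₁ + b' * n₂ + c' * n₃ = a₀ * n₁ + b * n₂ + c * n₃ := by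
        have : a₀' * n₁ + b' * n₂ + c' * n₃ + n₁ = (a₀ * n₁ + b * n₂ + c * n₃) + n₁ := by
          rw [← hm, ← hv']; ring
        omega
      have hIH := IH (a₀ * n₁ + b * n₂ + c * n₃) (by omega) a₀ b c a₀' b' c' rfl hm'
      have : (X 0 ^ (a₀ + 1) * X 1 ^ b * X 2 ^ c - X 0 ^ (a₀' + 1) * X 1 ^ b' * X 2 ^ c'
          : MvPolynomial (Fin 3) K)
          = X 0 * (X 0 ^ a₀ * X 1 ^ b * X 2 ^ c - X 0 ^ a₀' * X 1 ^ b' * X 2 ^ c') := by ring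
      rw [this]
      exact Ideal.mul_mem_left _ _ hIH
    · obtain ⟨b₀, rfl⟩ : ∃ t, b = t + 1 := ⟨b - 1, by omega⟩
      obtain ⟨b₀', rfl⟩ : ∃ t, b' = t + 1 := ⟨b' - 1, by omega⟩
      have hm : m = (a * n₁ + b₀ * n₂ + c * n₃) + n₂ := by rw [← hv]; ring
      have hm' : a' * n₁ + b₀' * n₂ + c' * n₃ = a * n₁ + b₀ * n₂ + c * n₃ := by
        have : a' * n₁ + b₀' * n₂ + c' * n₃ + n₂ = (a * n₁ + b₀ * n₂ + c * n₃) + n₂ := by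
          rw [← hm, ← hv']; ring
        omega
      have hIH := IH (a * n₁ + b₀ * n₂ + c * n₃) (by omega) a b₀ c a' b₀' c' rfl hm'
      have : (X 0 ^ a * X 1 ^ (b₀ + 1) * X 2 ^ c - X 0 ^ a' * X 1 ^ (b₀' + 1) * X 2 ^ c'
          : MvPolynomial (Fin 3) K)
          = X 1 * (X 0 ^ a * X 1 ^ b₀ * X 2 ^ c - X 0 ^ a' * X 1 ^ b₀' * X 2 ^ c') := by ring
      rw [this]
      exact Ideal.mul_mem_left _ _ hIH
    · obtain ⟨c₀, rfl⟩ : ∃ t, c = t + 1 := ⟨c - 1, by omega⟩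
      obtain ⟨c₀', rfl⟩ : ∃ t, c' = t + 1 := ⟨c' - 1, by omega⟩
      have hm : m = (a * n₁ + b * n₂ + c₀ * n₃) + n₃ := by rw [← hv]; ring
      have hm' : a' * n₁ + b' * n₂ + c₀' * n₃ = a * n₁ + b * n₂ + c₀ * n₃ := by
        have : a' * n₁ + b' * n₂ + c₀' * n₃ + n₃ = (a * n₁ + b * n₂ + c₀ * n₃) + n₃ := by
          rw [← hm, ← hv']; ring
        omega
      have hIH := IH (a * n₁ + b * n₂ + c₀ * n₃) (by omega) a b c₀ a' b' c₀' rfl hm'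
      have : (X 0 ^ a * X 1 ^ b * X 2 ^ (c₀ + 1) - X 0 ^ a' * X 1 ^ b' * X 2 ^ (c₀' + 1)
          : MvPolynomial (Fin 3) K)
          = X 2 * (X 0 ^ a * X 1 ^ b * X 2 ^ c₀ - X 0 ^ a' * X 1 ^ b' * X 2 ^ c₀') := by ring
      rw [this]
      exact Ideal.mul_mem_left _ _ hIH
  rcases Nat.eq_zero_or_pos m with hm0 | hm0
  · -- m = 0 : everything is zero
    subst hm0
    have hz : ∀ u v w : ℕ, u * n₁ + v * n₂ + w * n₃ = 0 → u = 0 ∧ v = 0 ∧ w = 0 := by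
      intro u v w h
      simp only [Nat.add_eq_zero, Nat.mul_eq_zero] at h
      omega
    obtain ⟨rfl, rfl, rfl⟩ := hz _ _ _ hv
    obtain ⟨rfl, rfl, rfl⟩ := hz _ _ _ hv'
    simpa using J.zero_mem
  -- m > 0
  have case1 : ∀ (a b' c' : ℕ), a * n₁ = m → b' * n₂ + c' * n₃ = m → 0 < a →
      (X 0 ^ a * X 1 ^ (0:ℕ) * X 2 ^ (0:ℕ) - X 0 ^ (0:ℕ) * X 1 ^ b' * X 2 ^ c'
        : MvPolynomial (Fin 3) K) ∈ J := by
    intro a b' c' hva hvb ha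
    have hage : r₂₁ + r₃₁ ≤ a := min₁ a ha ⟨b', c', by omega⟩
    obtain ⟨d, rfl⟩ : ∃ d, a = (r₂₁ + r₃₁) + d := ⟨a - (r₂₁ + r₃₁), by omega⟩
    have hval : d * n₁ + r₁₂ * n₂ + r₁₃ * n₃ = m := by
      have e : ((r₂₁ + r₃₁) + d) * n₁ = (r₂₁ + r₃₁) * n₁ + d * n₁ := by ring
      omega
    have hmid : (X 0 ^ d * X 1 ^ r₁₂ * X 2 ^ r₁₃ - X 0 ^ (0:ℕ) * X 1 ^ b' * X 2 ^ c'
        : MvPolynomial (Fin 3) K) ∈ J := by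
      rcases Nat.eq_zero_or_pos b' with hb' | hb'
      · have hc' : 0 < c' := by
          rcases Nat.eq_zero_or_pos c' with h | h
          · exfalso; subst hb'; subst h; simp at hvb; omega
          · exact h
        exact hred d r₁₂ r₁₃ 0 b' c' hval (by omega) (Or.inr (Or.inr ⟨h13, hc'⟩))
      · exact hred d r₁₂ r₁₃ 0 b' c' hval (by omega) (Or.inr (Or.inl ⟨h12, hb'⟩))
    have split : (X 0 ^ ((r₂₁ + r₃₁) + d) * X 1 ^ (0:ℕ) * X 2 ^ (0:ℕ)
        - X 0 ^ (0:ℕ) * X 1 ^ b' * X 2 ^ c' : MvPolynomial (Fin 3) K)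
        = X 0 ^ d * (X 0 ^ (r₂₁ + r₃₁) - X 1 ^ r₁₂ * X 2 ^ r₁₃)
          + (X 0 ^ d * X 1 ^ r₁₂ * X 2 ^ r₁₃ - X 0 ^ (0:ℕ) * X 1 ^ b' * X 2 ^ c') := by
      ring
    rw [split]
    exact J.add_mem (Ideal.mul_mem_left _ _ hg₁) hmid
  have case2 : ∀ (a c b' : ℕ), a * n₁ + c * n₃ = m → b' * n₂ = m → 0 < b' →
      (X 0 ^ a * X 1 ^ (0:ℕ) * X 2 ^ c - X 0 ^ (0:ℕ) * X 1 ^ b' * X 2 ^ (0:ℕ)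
        : MvPolynomial (Fin 3) K) ∈ J := by
    intro a c b' hva hvb hb'
    have hbge : r₁₂ + r₃₂ ≤ b' := min₂ b' hb' ⟨a, c, by omega⟩
    obtain ⟨d, rfl⟩ : ∃ d, b' = (r₁₂ + r₃₂) + d := ⟨b' - (r₁₂ + r₃₂), by omega⟩
    have hval : r₂₁ * n₁ + d * n₂ + r₂₃ * n₃ = m := by
      have e : ((r₁₂ + r₃₂) + d) * n₂ = (r₁₂ + r₃₂) * n₂ + d * n₂ := by ring
      omega
    have hmid : (X 0 ^ a * X 1 ^ (0:ℕ) * X 2 ^ c - X 0 ^ r₂₁ * X 1 ^ d * X 2 ^ r₂₃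
        : MvPolynomial (Fin 3) K) ∈ J := by
      rcases Nat.eq_zero_or_pos a with ha | ha
      · have hc : 0 < c := by
          rcases Nat.eq_zero_or_pos c with h | h
          · exfalso; subst ha; subst h; simp at hva; omega
          · exact h
        exact hred a 0 c r₂₁ d r₂₃ (by omega) hval (Or.inr (Or.inr ⟨hc, h23⟩))
      · exact hred a 0 c r₂₁ d r₂₃ (by omega) hval (Or.inl ⟨ha, h21⟩)
    have split : (X 0 ^ a * X 1 ^ (0:ℕ) * X 2 ^ c
        - X 0 ^ (0:ℕ) * X 1 ^ ((r₁₂ + r₃₂) + d) * X 2 ^ (0:ℕ) : MvPolynomial (Fin 3) K)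
        = -(X 1 ^ d * (X 1 ^ (r₁₂ + r₃₂) - X 0 ^ r₂₁ * X 2 ^ r₂₃))
          + (X 0 ^ a * X 1 ^ (0:ℕ) * X 2 ^ c - X 0 ^ r₂₁ * X 1 ^ d * X 2 ^ r₂₃) := by
      ring
    rw [split]
    exact J.add_mem (J.neg_mem (Ideal.mul_mem_left _ _ hg₃)) hmid
  have case3 : ∀ (a b c' : ℕ), a * n₁ + b * n₂ = m → c' * n₃ = m → 0 < c' →
      (X 0 ^ a * X 1 ^ b * X 2 ^ (0:ℕ) - X 0 ^ (0:ℕ) * X 1 ^ (0:ℕ) * X 2 ^ c'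
        : MvPolynomial (Fin 3) K) ∈ J := by
    intro a b c' hva hvb hc'
    have hcge : r₁₃ + r₂₃ ≤ c' := min₃ c' hc' ⟨a, b, by omega⟩
    obtain ⟨d, rfl⟩ : ∃ d, c' = (r₁₃ + r₂₃) + d := ⟨c' - (r₁₃ + r₂₃), by omega⟩
    have hval : r₃₁ * n₁ + r₃₂ * n₂ + d * n₃ = m := by
      have e : ((r₁₃ + r₂₃) + d) * n₃ = (r₁₃ + r₂₃) * n₃ + d * n₃ := by ring
      omega
    have hmid : (X 0 ^ a * X 1 ^ b * X 2 ^ (0:ℕ) - X 0 ^ r₃₁ * X 1 ^ r₃₂ * X 2 ^ d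
        : MvPolynomial (Fin 3) K) ∈ J := by
      rcases Nat.eq_zero_or_pos a with ha | ha
      · have hb : 0 < b := by
          rcases Nat.eq_zero_or_pos b with h | h
          · exfalso; subst ha; subst h; simp at hva; omega
          · exact h
        exact hred a b 0 r₃₁ r₃₂ d (by omega) hval (Or.inr (Or.inl ⟨hb, h32⟩))
      · exact hred a b 0 r₃₁ r₃₂ d (by omega) hval (Or.inl ⟨ha, h31⟩)
    have split : (X 0 ^ a * X 1 ^ b * X 2 ^ (0:ℕ)
        - X 0 ^ (0:ℕ) * X 1 ^ (0:ℕ) * X 2 ^ ((r₁₃ + r₂₃) + d) : MvPolynomial (Fin 3) K)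
        = X 2 ^ d * (X 0 ^ r₃₁ * X 1 ^ r₃₂ - X 2 ^ (r₁₃ + r₂₃))
          + (X 0 ^ a * X 1 ^ b * X 2 ^ (0:ℕ) - X 0 ^ r₃₁ * X 1 ^ r₃₂ * X 2 ^ d) := by
      ring
    rw [split]
    exact J.add_mem (Ideal.mul_mem_left _ _ hg₂) hmid
  -- decision tree
  by_cases hA : 0 < a ∧ 0 < a'
  · exact hred a b c a' b' c' hv hv' (Or.inl hA)
  by_cases hB : 0 < b ∧ 0 < b'
  · exact hred a b c a' b' c' hv hv' (Or.inr (Or.inl hB))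
  by_cases hC : 0 < c ∧ 0 < c'
  · exact hred a b c a' b' c' hv hv' (Or.inr (Or.inr hC))
  have hnz : 0 < a ∨ 0 < b ∨ 0 < c := by
    by_contra h
    push_neg at h
    obtain ⟨h1, h2, h3⟩ := h
    interval_cases a <;> interval_cases b <;> interval_cases c <;> simp at hv <;> omega
  have hnz' : 0 < a' ∨ 0 < b' ∨ 0 < c' := by
    by_contra h
    push_neg at h
    obtain ⟨h1, h2, h3⟩ := h
    interval_cases a' <;> interval_cases b' <;> interval_cases c' <;> simp at hv' <;> omega
  have treeA : ∀ (a b c a' b' c' : ℕ), a * n₁ + b * n₂ + c * n₃ = m →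
      a' * n₁ + b' * n₂ + c' * n₃ = m → 0 < a → a' = 0 →
      ¬(0 < b ∧ 0 < b') → ¬(0 < c ∧ 0 < c') → (0 < b' ∨ 0 < c') →
      (X 0 ^ a * X 1 ^ b * X 2 ^ c - X 0 ^ a' * X 1 ^ b' * X 2 ^ c'
        : MvPolynomial (Fin 3) K) ∈ J := by
    rintro a b c a' b' c' hv hv' ha rfl hB hC hnz'
    by_cases hb : 0 < b
    · have hb' : b' = 0 := by omega
      have hc' : 0 < c' := by omega
      have hc : c = 0 := by omega
      subst hb'; subst hc
      exact case3 a b c' (by omega) (by omega) hc'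
    · have hb0 : b = 0 := by omega
      subst hb0
      by_cases hc : 0 < c
      · have hc' : c' = 0 := by omega
        have hb' : 0 < b' := by omega
        subst hc'
        exact case2 a c b' (by omega) (by omega) hb'
      · have hc0 : c = 0 := by omega
        subst hc0
        exact case1 a b' c' (by omega) (by omega) ha
  by_cases ha : 0 < a
  · have ha' : a' = 0 := by omega
    exact treeA a b c a' b' c' hv hv' ha ha' hB hC (by omega)
  have ha0 : a = 0 := by omega
  subst ha0
  by_cases ha' : 0 < a'
  · have goal' := treeA a' b' c' 0 b c hv' (by omega) ha' rfl (by tauto) (by tauto) (by omega)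
    have : (X 0 ^ (0:ℕ) * X 1 ^ b * X 2 ^ c - X 0 ^ a' * X 1 ^ b' * X 2 ^ c'
        : MvPolynomial (Fin 3) K)
        = -(X 0 ^ a' * X 1 ^ b' * X 2 ^ c' - X 0 ^ (0:ℕ) * X 1 ^ b * X 2 ^ c) := by ring
    rw [this]
    exact J.neg_mem goal'
  · have ha0' : a' = 0 := by omega
    subst ha0'
    by_cases hb : 0 < b
    · have hb' : b' = 0 := by omega
      have hc' : 0 < c' := by omega
      have hc : c = 0 := by omega
      subst hb'; subst hc
      exact case3 0 b c' (by omega) (by omega) hc'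
    · have hb0 : b = 0 := by omega
      subst hb0
      have hc : 0 < c := by omega
      have hc' : c' = 0 := by omega
      have hb' : 0 < b' := by omega
      subst hc'
      have goal' := case2 0 c b' (by omega) (by omega) hb'
      exact goal'


lemma monomial_eq_prod (K : Type*) [Field K] (d : Fin 3 →₀ ℕ) (r : K) :
    (monomial d r : MvPolynomial (Fin 3) K)
      = C r * X 0 ^ (d 0) * X 1 ^ (d 1) * X 2 ^ (d 2) := by
  have hd : (Finsupp.single 0 (d 0) + Finsupp.single 1 (d 1) + Finsupp.single 2 (d 2)
      : Fin 3 →₀ ℕ) = d := by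
    ext i; fin_cases i <;> simp
  rw [X_pow_eq_monomial, X_pow_eq_monomial, X_pow_eq_monomial, C_apply,
    monomial_mul, monomial_mul, monomial_mul]
  rw [mul_one, mul_one, mul_one, zero_add, hd]

set_option maxHeartbeats 1000000 in
lemma kerSub (K : Type*) [Field K] (n₁ n₂ n₃ : ℕ) (J : Ideal (MvPolynomial (Fin 3) K))
    (hmono : ∀ a b c a' b' c' : ℕ, a * n₁ + b * n₂ + c * n₃ = a' * n₁ + b' * n₂ + c' * n₃ →
      (X 0 ^ a * X 1 ^ b * X 2 ^ c - X 0 ^ a' * X 1 ^ b' * X 2 ^ c'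
        : MvPolynomial (Fin 3) K) ∈ J) :
    ∀ (N : ℕ) (f : MvPolynomial (Fin 3) K), f.support.card ≤ N →
      (aeval ![Polynomial.X ^ n₁, Polynomial.X ^ n₂, Polynomial.X ^ n₃] f : Polynomial K) = 0 → f ∈ J := by
  set g : Fin 3 → Polynomial K := ![Polynomial.X ^ n₁, Polynomial.X ^ n₂, Polynomial.X ^ n₃]
    with hg
  set v : (Fin 3 →₀ ℕ) → ℕ := fun d => d 0 * n₁ + d 1 * n₂ + d 2 * n₃ with hv
  have key : ∀ (d : Fin 3 →₀ ℕ) (r : K),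
      aeval g (monomial d r : MvPolynomial (Fin 3) K) = Polynomial.C r * Polynomial.X ^ v d := by
    intro d r
    rw [monomial_eq_prod]
    simp only [map_mul, map_pow, aeval_X, aeval_C, hg, hv]
    simp only [Matrix.cons_val_zero, Matrix.cons_val_one, Matrix.head_cons,
      Matrix.cons_val_two, Matrix.tail_cons, ← pow_mul, ← pow_add]
    rw [Polynomial.algebraMap_eq]
    ring
  intro N
  induction N with
  | zero =>
    intro f hcard _
    have : f = 0 := by
      rwa [Nat.le_zero, Finset.card_eq_zero, support_eq_empty] at hcard
    simp [this]
  | succ N IH =>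
    intro f hcard hf0
    by_cases hf : f = 0
    · simp [hf]
    -- pick d₀ in the support
    obtain ⟨d₀, hd₀⟩ := Finset.nonempty_iff_ne_empty.2 (fun h => hf (support_eq_empty.1 h))
    have hsum : (0 : Polynomial K) = ∑ d ∈ f.support, Polynomial.C (coeff d f) * Polynomial.X ^ v d := by
      rw [← hf0]
      conv_lhs => rw [f.as_sum]
      rw [map_sum]
      exact Finset.sum_congr rfl fun d _ => key d _
    have hcoeff : ∑ d ∈ f.support.filter (fun d => v d₀ = v d), coeff d f = 0 := by
      have h2 : Polynomial.coeff
          (∑ d ∈ f.support, Polynomial.C (coeff d f) * Polynomial.X ^ v d) (v d₀) = 0 := by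
        rw [← hsum]; simp
      rw [Polynomial.finset_sum_coeff] at h2
      simp only [Polynomial.coeff_C_mul, Polynomial.coeff_X_pow] at h2
      rw [Finset.sum_filter]
      calc (∑ x ∈ f.support, if v d₀ = v x then coeff x f else 0)
          = ∑ x ∈ f.support, coeff x f * (if v d₀ = v x then 1 else 0) :=
            Finset.sum_congr rfl fun d _ => by split <;> simp
        _ = 0 := h2
    have hd₀F : d₀ ∈ f.support.filter (fun d => v d₀ = v d) := Finset.mem_filter.2 ⟨hd₀, rfl⟩
    have hne : f.support.filter (fun d => v d₀ = v d) ≠ {d₀} := by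
      intro h
      rw [h, Finset.sum_singleton] at hcoeff
      exact (mem_support_iff.1 hd₀) hcoeff
    obtain ⟨d₁, hd₁F, hd₁ne⟩ : ∃ d₁ ∈ f.support.filter (fun d => v d₀ = v d), d₁ ≠ d₀ := by
      by_contra h
      push_neg at h
      exact hne (Finset.eq_singleton_iff_unique_mem.2 ⟨hd₀F, h⟩)
    have hd₁supp : d₁ ∈ f.support := (Finset.mem_filter.1 hd₁F).1
    have hd₁v : v d₀ = v d₁ := (Finset.mem_filter.1 hd₁F).2
    set p : MvPolynomial (Fin 3) K := monomial d₀ 1 - monomial d₁ 1 with hp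
    have hpJ : p ∈ J := by
      rw [hp, monomial_eq_prod, monomial_eq_prod, map_one, one_mul, one_mul]
      exact hmono _ _ _ _ _ _ hd₁v
    have hpker : aeval g p = 0 := by
      rw [hp, map_sub, key, key, hd₁v, sub_self]
    set f' : MvPolynomial (Fin 3) K := f - C (coeff d₀ f) * p with hf'
    have hf'0 : aeval g f' = 0 := by
      rw [hf', map_sub, map_mul, hpker, mul_zero, sub_zero, hf0]
    have hcoeff' : ∀ d, coeff d f' = coeff d f
        - coeff d₀ f * ((if d₀ = d then (1:K) else 0) - (if d₁ = d then 1 else 0)) := by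
      intro d
      rw [hf', hp]
      simp [coeff_sub, coeff_monomial, mul_sub]
    have hsupp' : f'.support ⊆ f.support.erase d₀ := by
      intro d hd
      rw [mem_support_iff] at hd
      have hcd := hcoeff' d
      rw [Finset.mem_erase]
      refine ⟨?_, ?_⟩
      · intro heq
        apply hd
        rw [hcd, heq]
        simp [if_pos rfl, if_neg hd₁ne]
      · by_cases h1 : d = d₁
        · exact h1 ▸ hd₁supp
        · by_cases h2 : d = d₀
          · exact h2 ▸ hd₀
          · rw [mem_support_iff]
            intro h0
            apply hd
            rw [hcd, h0]
            simp [show d₀ ≠ d from fun h => h2 h.symm, show d₁ ≠ d from fun h => h1 h.symm]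
    have hcard' : f'.support.card ≤ N := by
      have h1 := Finset.card_le_card hsupp'
      rw [Finset.card_erase_of_mem hd₀] at h1
      omega
    have hf'J : f' ∈ J := IH f' hcard' hf'0
    have : f = f' + C (coeff d₀ f) * p := by rw [hf']; ring
    rw [this]
    exact J.add_mem hf'J (Ideal.mul_mem_left _ _ hpJ)

open MvPolynomial in
/-- for `S = ⟨n₁,n₂,n₃⟩` minimally generated and not symmetric,
with the standard `cᵢ`, `r_{i,j}` setup, the toric ideal of `S` is generated
by the maximal minors of `((X^{r₃₁}, Y^{r₁₂}, Z^{r₂₃}), (Z^{r₁₃}, X^{r₂₁}, Y^{r₃₂}))`. -/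
theorem stmt8 (K : Type*) [Field K]
    (n₁ n₂ n₃ : ℕ)
    (h1 : 0 < n₁) (h12 : n₁ < n₂) (h23 : n₂ < n₃)
    (hgcd : Nat.gcd n₁ (Nat.gcd n₂ n₃) = 1)
    (hmin1 : n₁ ∉ AddSubmonoid.closure {n₂, n₃})
    (hmin2 : n₂ ∉ AddSubmonoid.closure {n₁, n₃})
    (hmin3 : n₃ ∉ AddSubmonoid.closure {n₁, n₂})
    (S : AddSubmonoid ℕ) (hS : S = AddSubmonoid.closure {n₁, n₂, n₃})
    (hnotsym : ¬ ∀ x : ℤ, ¬ S.zmem x ↔ S.zmem (frobeniusNumber S - x))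
    (c₁ c₂ c₃ : ℕ)
    (hc₁ : 0 < c₁ ∧ c₁ * n₁ ∈ AddSubmonoid.closure {n₂, n₃} ∧
      ∀ c : ℕ, 0 < c → c * n₁ ∈ AddSubmonoid.closure {n₂, n₃} → c₁ ≤ c)
    (hc₂ : 0 < c₂ ∧ c₂ * n₂ ∈ AddSubmonoid.closure {n₁, n₃} ∧
      ∀ c : ℕ, 0 < c → c * n₂ ∈ AddSubmonoid.closure {n₁, n₃} → c₂ ≤ c)
    (hc₃ : 0 < c₃ ∧ c₃ * n₃ ∈ AddSubmonoid.closure {n₁, n₂} ∧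
      ∀ c : ℕ, 0 < c → c * n₃ ∈ AddSubmonoid.closure {n₁, n₂} → c₃ ≤ c)
    (r₁₂ r₁₃ r₂₁ r₂₃ r₃₁ r₃₂ : ℕ)
    (hr₁ : 0 < r₁₂ ∧ 0 < r₁₃ ∧ c₁ * n₁ = r₁₂ * n₂ + r₁₃ * n₃)
    (hr₂ : 0 < r₂₁ ∧ 0 < r₂₃ ∧ c₂ * n₂ = r₂₁ * n₁ + r₂₃ * n₃)
    (hr₃ : 0 < r₃₁ ∧ 0 < r₃₂ ∧ c₃ * n₃ = r₃₁ * n₁ + r₃₂ * n₂)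
    (φ : MvPolynomial (Fin 3) K →ₐ[K] Polynomial K)
    (hφ : φ = aeval ![Polynomial.X ^ n₁, Polynomial.X ^ n₂, Polynomial.X ^ n₃]) :
    RingHom.ker (φ : MvPolynomial (Fin 3) K →+* Polynomial K) =
      Ideal.span {X 0 ^ (r₂₁ + r₃₁) - X 1 ^ r₁₂ * X 2 ^ r₁₃,
                  X 0 ^ r₃₁ * X 1 ^ r₃₂ - X 2 ^ (r₁₃ + r₂₃),
                  X 1 ^ (r₁₂ + r₃₂) - X 0 ^ r₂₁ * X 2 ^ r₂₃} := by
  obtain ⟨hc₁p, hc₁m, hc₁min⟩ := hc₁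
  obtain ⟨hc₂p, hc₂m, hc₂min⟩ := hc₂
  obtain ⟨hc₃p, hc₃m, hc₃min⟩ := hc₃
  obtain ⟨h12p, h13p, hre₁⟩ := hr₁
  obtain ⟨h21p, h23p, hre₂⟩ := hr₂
  obtain ⟨h31p, h32p, hre₃⟩ := hr₃
  have hn₂ : 0 < n₂ := lt_trans h1 h12
  have hn₃ : 0 < n₃ := lt_trans hn₂ h23
  have min₁ : ∀ c, 0 < c → (∃ p q, c * n₁ = p * n₂ + q * n₃) → c₁ ≤ c := by
    rintro c hc ⟨p, q, h⟩
    exact hc₁min c hc ((AddSubmonoid.mem_closure_pair _ _ _).2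
      ⟨p, q, by simpa [smul_eq_mul] using h.symm⟩)
  have min₂ : ∀ c, 0 < c → (∃ p q, c * n₂ = p * n₁ + q * n₃) → c₂ ≤ c := by
    rintro c hc ⟨p, q, h⟩
    exact hc₂min c hc ((AddSubmonoid.mem_closure_pair _ _ _).2
      ⟨p, q, by simpa [smul_eq_mul] using h.symm⟩)
  have min₃ : ∀ c, 0 < c → (∃ p q, c * n₃ = p * n₁ + q * n₂) → c₃ ≤ c := by
    rintro c hc ⟨p, q, h⟩
    exact hc₃min c hc ((AddSubmonoid.mem_closure_pair _ _ _).2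
      ⟨p, q, by simpa [smul_eq_mul] using h.symm⟩)
  obtain ⟨hA₁, hA₂, hA₃⟩ := herzogA n₁ n₂ n₃ c₁ c₂ c₃ r₁₂ r₁₃ r₂₁ r₂₃ r₃₁ r₃₂
    h1 hn₂ hn₃ h12p h13p h21p h23p h31p h32p hre₁ hre₂ hre₃ min₁ min₂ min₃
  have hre₁' : (r₂₁ + r₃₁) * n₁ = r₁₂ * n₂ + r₁₃ * n₃ := hA₁ ▸ hre₁
  have hre₂' : (r₁₂ + r₃₂) * n₂ = r₂₁ * n₁ + r₂₃ * n₃ := hA₂ ▸ hre₂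
  have hre₃' : (r₁₃ + r₂₃) * n₃ = r₃₁ * n₁ + r₃₂ * n₂ := hA₃ ▸ hre₃
  have min₁' : ∀ c, 0 < c → (∃ p q, c * n₁ = p * n₂ + q * n₃) → r₂₁ + r₃₁ ≤ c := hA₁ ▸ min₁
  have min₂' : ∀ c, 0 < c → (∃ p q, c * n₂ = p * n₁ + q * n₃) → r₁₂ + r₃₂ ≤ c := hA₂ ▸ min₂
  have min₃' : ∀ c, 0 < c → (∃ p q, c * n₃ = p * n₁ + q * n₂) → r₁₃ + r₂₃ ≤ c := hA₃ ▸ min₃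
  apply le_antisymm
  · -- ker ⊆ span
    intro f hf
    have hf0 : (aeval ![Polynomial.X ^ n₁, Polynomial.X ^ n₂, Polynomial.X ^ n₃] f
        : Polynomial K) = 0 := by
      rw [← hφ]
      exact RingHom.mem_ker.1 hf
    exact kerSub K n₁ n₂ n₃ _
      (fun a b c a' b' c' heq =>
        monoMem K n₁ n₂ n₃ r₁₂ r₁₃ r₂₁ r₂₃ r₃₁ r₃₂ h1 hn₂ hn₃
          h12p h13p h21p h23p h31p h32p hre₁' hre₂' hre₃' min₁' min₂' min₃'
          (a * n₁ + b * n₂ + c * n₃) a b c a' b' c' rfl heq.symm)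
      f.support.card f le_rfl hf0
  · -- span ⊆ ker
    rw [Ideal.span_le]
    intro g hg
    simp only [Set.mem_insert_iff, Set.mem_singleton_iff] at hg
    rw [SetLike.mem_coe, RingHom.mem_ker]
    subst hφ
    rcases hg with rfl | rfl | rfl
    · simp only [AlgHom.coe_toRingHom, map_sub, map_mul, map_pow, aeval_X,
        Matrix.cons_val_zero, Matrix.cons_val_one, Matrix.head_cons, Matrix.cons_val_two,
        Matrix.tail_cons, ← pow_mul, ← pow_add]
      rw [sub_eq_zero]
      congr 1
      zify at hre₁' ⊢
      linarith
    · simp only [AlgHom.coe_toRingHom, map_sub, map_mul, map_pow, aeval_X,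
        Matrix.cons_val_zero, Matrix.cons_val_one, Matrix.head_cons, Matrix.cons_val_two,
        Matrix.tail_cons, ← pow_mul, ← pow_add]
      rw [sub_eq_zero]
      congr 1
      zify at hre₃' ⊢
      linarith
    · simp only [AlgHom.coe_toRingHom, map_sub, map_mul, map_pow, aeval_X,
        Matrix.cons_val_zero, Matrix.cons_val_one, Matrix.head_cons, Matrix.cons_val_two,
        Matrix.tail_cons, ← pow_mul, ← pow_add]
      rw [sub_eq_zero]
      congr 1
      zify at hre₂' ⊢
      linarith
end

section
/- Let S = ⟨n_1,n_2,n_3⟩ be a numerical semigroup minimally generated by n_1 < n_2 < n_3 with gcd(n_1,n_2,n_3)=1 which is not symmetric. For {i,j,k} = {1,2,3} let c_i be the minimal positive integer with c_i n_i ∈ ⟨n_j, n_k⟩, and let r_{i,j}, r_{i,k} be the (unique) positive integers with c_i n_i = r_{i,j} n_j + r_{i,k} n_k. Then the set of pseudo-Frobenius numbers of S equals T(S) = {(c_3−1)n_3 + (r_{1,2}−1)n_2 − n_1, (c_2−1)n_2 + (r_{1,3}−1)n_3 − n_1}. -/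
set_option maxHeartbeats 8000000

lemma psf_pair (p q m : ℕ) :
    m ∈ AddSubmonoid.closure ({p, q} : Set ℕ) ↔ ∃ x y : ℕ, x * p + y * q = m := by
  rw [AddSubmonoid.mem_closure_pair]; simp_rw [smul_eq_mul]

lemma psf_trip (a b c m : ℕ) :
    m ∈ AddSubmonoid.closure ({a, b, c} : Set ℕ) ↔ ∃ x y z : ℕ, x * a + y * b + z * c = m := by
  rw [show ({a,b,c} : Set ℕ) = {a} ∪ {b,c} from (Set.singleton_union).symm]
  rw [AddSubmonoid.closure_union, AddSubmonoid.mem_sup]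
  simp_rw [AddSubmonoid.mem_closure_singleton, AddSubmonoid.mem_closure_pair, smul_eq_mul]
  constructor
  · rintro ⟨y, ⟨x1, rfl⟩, z, ⟨x2, x3, rfl⟩, rfl⟩
    exact ⟨x1, x2, x3, by ring⟩
  · rintro ⟨x1, x2, x3, rfl⟩
    exact ⟨x1 * a, ⟨x1, rfl⟩, x2 * b + x3 * c, ⟨x2, x3, rfl⟩, by ring⟩

lemma psf_key (p q r k : ℕ)
    (hmin : ∀ c : ℕ, 0 < c → c * p ∈ AddSubmonoid.closure ({q, r} : Set ℕ) → k ≤ c) :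
    ∀ x y z : ℤ, x * p = y * q + z * r → 0 < x → x < k → 0 ≤ y → 0 ≤ z → False := by
  intro x y z heq hx hxk hy hz
  lift x to ℕ using hx.le
  lift y to ℕ using hy
  lift z to ℕ using hz
  have h1 : y * q + z * r = x * p := by exact_mod_cast heq.symm
  have h2 := hmin x (by exact_mod_cast hx) ((psf_pair q r (x*p)).mpr ⟨y, z, h1⟩)
  have h3 : (k:ℤ) ≤ x := by exact_mod_cast h2
  linarith

/-- for `S = ⟨n₁,n₂,n₃⟩` minimally generated, not symmetric, with
the standard `cᵢ`, `r_{i,j}` setup, the set of pseudo-Frobenius numbers is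
`T(S) = {(c₃−1)n₃ + (r₁₂−1)n₂ − n₁, (c₂−1)n₂ + (r₁₃−1)n₃ − n₁}`. -/
theorem stmt9
    (n₁ n₂ n₃ : ℕ)
    (h1 : 0 < n₁) (h12 : n₁ < n₂) (h23 : n₂ < n₃)
    (hgcd : Nat.gcd n₁ (Nat.gcd n₂ n₃) = 1)
    (hmin1 : n₁ ∉ AddSubmonoid.closure {n₂, n₃})
    (hmin2 : n₂ ∉ AddSubmonoid.closure {n₁, n₃})
    (hmin3 : n₃ ∉ AddSubmonoid.closure {n₁, n₂})
    (S : AddSubmonoid ℕ) (hS : S = AddSubmonoid.closure {n₁, n₂, n₃})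
    (hnotsym : ¬ ∀ x : ℤ, ¬ S.zmem x ↔ S.zmem (frobeniusNumber S - x))
    (c₁ c₂ c₃ : ℕ)
    (hc₁ : 0 < c₁ ∧ c₁ * n₁ ∈ AddSubmonoid.closure {n₂, n₃} ∧
      ∀ c : ℕ, 0 < c → c * n₁ ∈ AddSubmonoid.closure {n₂, n₃} → c₁ ≤ c)
    (hc₂ : 0 < c₂ ∧ c₂ * n₂ ∈ AddSubmonoid.closure {n₁, n₃} ∧
      ∀ c : ℕ, 0 < c → c * n₂ ∈ AddSubmonoid.closure {n₁, n₃} → c₂ ≤ c)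
    (hc₃ : 0 < c₃ ∧ c₃ * n₃ ∈ AddSubmonoid.closure {n₁, n₂} ∧
      ∀ c : ℕ, 0 < c → c * n₃ ∈ AddSubmonoid.closure {n₁, n₂} → c₃ ≤ c)
    (r₁₂ r₁₃ r₂₁ r₂₃ r₃₁ r₃₂ : ℕ)
    (hr₁ : 0 < r₁₂ ∧ 0 < r₁₃ ∧ c₁ * n₁ = r₁₂ * n₂ + r₁₃ * n₃)
    (hr₂ : 0 < r₂₁ ∧ 0 < r₂₃ ∧ c₂ * n₂ = r₂₁ * n₁ + r₂₃ * n₃)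
    (hr₃ : 0 < r₃₁ ∧ 0 < r₃₂ ∧ c₃ * n₃ = r₃₁ * n₁ + r₃₂ * n₂)
    : pseudoFrobeniusSet S =
      {((c₃ : ℤ) - 1) * n₃ + ((r₁₂ : ℤ) - 1) * n₂ - n₁,
       ((c₂ : ℤ) - 1) * n₂ + ((r₁₃ : ℤ) - 1) * n₃ - n₁} := by
  obtain ⟨hc1pos, hc1mem, hc1min⟩ := hc₁
  obtain ⟨hc2pos, hc2mem, hc2min⟩ := hc₂
  obtain ⟨hc3pos, hc3mem, hc3min⟩ := hc₃
  obtain ⟨h12pos, h13pos, e1⟩ := hr₁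
  obtain ⟨h21pos, h23pos, e2⟩ := hr₂
  obtain ⟨h31pos, h32pos, e3⟩ := hr₃
  have hn1 : (0:ℤ) < (n₁:ℤ) := by exact_mod_cast h1
  have hn2 : (0:ℤ) < (n₂:ℤ) := by omega
  have hn3 : (0:ℤ) < (n₃:ℤ) := by omega
  have E1 : (c₁:ℤ) * n₁ = r₁₂ * n₂ + r₁₃ * n₃ := by exact_mod_cast e1
  have E2 : (c₂:ℤ) * n₂ = r₂₁ * n₁ + r₂₃ * n₃ := by exact_mod_cast e2
  have E3 : (c₃:ℤ) * n₃ = r₃₁ * n₁ + r₃₂ * n₂ := by exact_mod_cast e3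
  have K1 := psf_key n₁ n₂ n₃ c₁ hc1min
  have K2 := psf_key n₂ n₁ n₃ c₂ hc2min
  have K3 := psf_key n₃ n₁ n₂ c₃ hc3min
  have p12 : (1:ℤ) ≤ (r₁₂:ℤ) := by omega
  have p13 : (1:ℤ) ≤ (r₁₃:ℤ) := by omega
  have p21 : (1:ℤ) ≤ (r₂₁:ℤ) := by omega
  have p23 : (1:ℤ) ≤ (r₂₃:ℤ) := by omega
  have p31 : (1:ℤ) ≤ (r₃₁:ℤ) := by omega
  have p32 : (1:ℤ) ≤ (r₃₂:ℤ) := by omega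
  have pc1 : (1:ℤ) ≤ (c₁:ℤ) := by omega
  have pc2 : (1:ℤ) ≤ (c₂:ℤ) := by omega
  have pc3 : (1:ℤ) ≤ (c₃:ℤ) := by omega
  have posfac : ∀ a b : ℤ, 0 < b → 0 < a * b → 0 < a := by
    intro a b hb hab
    rcases mul_pos_iff.mp hab with ⟨h, _⟩ | ⟨_, h⟩
    · exact h
    · linarith
  -- Claim A : the six inequalities r_{ij} < c_j
  have A12 : (r₁₂:ℤ) < c₂ := by
    by_contra hcon
    push_neg at hcon
    have h2 : ((c₁:ℤ) - r₂₁) * n₁ = ((r₁₂:ℤ) - c₂) * n₂ + ((r₁₃:ℤ) + r₂₃) * n₃ := by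
      linear_combination E1 + E2
    have t1 : (0:ℤ) ≤ ((r₁₂:ℤ) - c₂) * n₂ := mul_nonneg (by linarith) hn2.le
    have t2 : (n₃:ℤ) ≤ ((r₁₃:ℤ) + r₂₃) * n₃ := le_mul_of_one_le_left hn3.le (by linarith)
    have hpos : 0 < (c₁:ℤ) - r₂₁ := posfac _ _ hn1 (by linarith)
    exact K1 _ _ _ h2 hpos (by linarith) (by linarith) (by linarith)
  have A13 : (r₁₃:ℤ) < c₃ := by
    by_contra hcon
    push_neg at hcon
    have h2 : ((c₁:ℤ) - r₃₁) * n₁ = ((r₁₂:ℤ) + r₃₂) * n₂ + ((r₁₃:ℤ) - c₃) * n₃ := by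
      linear_combination E1 + E3
    have t1 : (0:ℤ) ≤ ((r₁₃:ℤ) - c₃) * n₃ := mul_nonneg (by linarith) hn3.le
    have t2 : (n₂:ℤ) ≤ ((r₁₂:ℤ) + r₃₂) * n₂ := le_mul_of_one_le_left hn2.le (by linarith)
    have hpos : 0 < (c₁:ℤ) - r₃₁ := posfac _ _ hn1 (by linarith)
    exact K1 _ _ _ h2 hpos (by linarith) (by linarith) (by linarith)
  have A21 : (r₂₁:ℤ) < c₁ := by
    by_contra hcon
    push_neg at hcon
    have h2 : ((c₂:ℤ) - r₁₂) * n₂ = ((r₂₁:ℤ) - c₁) * n₁ + ((r₁₃:ℤ) + r₂₃) * n₃ := by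
      linear_combination E1 + E2
    have t1 : (0:ℤ) ≤ ((r₂₁:ℤ) - c₁) * n₁ := mul_nonneg (by linarith) hn1.le
    have t2 : (n₃:ℤ) ≤ ((r₁₃:ℤ) + r₂₃) * n₃ := le_mul_of_one_le_left hn3.le (by linarith)
    have hpos : 0 < (c₂:ℤ) - r₁₂ := posfac _ _ hn2 (by linarith)
    exact K2 _ _ _ h2 hpos (by linarith) (by linarith) (by linarith)
  have A23 : (r₂₃:ℤ) < c₃ := by
    by_contra hcon
    push_neg at hcon
    have h2 : ((c₂:ℤ) - r₃₂) * n₂ = ((r₂₁:ℤ) + r₃₁) * n₁ + ((r₂₃:ℤ) - c₃) * n₃ := by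
      linear_combination E2 + E3
    have t1 : (0:ℤ) ≤ ((r₂₃:ℤ) - c₃) * n₃ := mul_nonneg (by linarith) hn3.le
    have t2 : (n₁:ℤ) ≤ ((r₂₁:ℤ) + r₃₁) * n₁ := le_mul_of_one_le_left hn1.le (by linarith)
    have hpos : 0 < (c₂:ℤ) - r₃₂ := posfac _ _ hn2 (by linarith)
    exact K2 _ _ _ h2 hpos (by linarith) (by linarith) (by linarith)
  have A31 : (r₃₁:ℤ) < c₁ := by
    by_contra hcon
    push_neg at hcon
    have h2 : ((c₃:ℤ) - r₁₃) * n₃ = ((r₃₁:ℤ) - c₁) * n₁ + ((r₁₂:ℤ) + r₃₂) * n₂ := by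
      linear_combination E1 + E3
    have t1 : (0:ℤ) ≤ ((r₃₁:ℤ) - c₁) * n₁ := mul_nonneg (by linarith) hn1.le
    have t2 : (n₂:ℤ) ≤ ((r₁₂:ℤ) + r₃₂) * n₂ := le_mul_of_one_le_left hn2.le (by linarith)
    have hpos : 0 < (c₃:ℤ) - r₁₃ := posfac _ _ hn3 (by linarith)
    exact K3 _ _ _ h2 hpos (by linarith) (by linarith) (by linarith)
  have A32 : (r₃₂:ℤ) < c₂ := by
    by_contra hcon
    push_neg at hcon
    have h2 : ((c₃:ℤ) - r₂₃) * n₃ = ((r₂₁:ℤ) + r₃₁) * n₁ + ((r₃₂:ℤ) - c₂) * n₂ := by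
      linear_combination E2 + E3
    have t1 : (0:ℤ) ≤ ((r₃₂:ℤ) - c₂) * n₂ := mul_nonneg (by linarith) hn2.le
    have t2 : (n₁:ℤ) ≤ ((r₂₁:ℤ) + r₃₁) * n₁ := le_mul_of_one_le_left hn1.le (by linarith)
    have hpos : 0 < (c₃:ℤ) - r₂₃ := posfac _ _ hn3 (by linarith)
    exact K3 _ _ _ h2 hpos (by linarith) (by linarith) (by linarith)
  -- Claim B : c₁ = r₂₁+r₃₁, c₂ = r₁₂+r₃₂, c₃ = r₁₃+r₂₃
  have hsum : ((c₁:ℤ) - r₂₁ - r₃₁) * n₁ + ((c₂:ℤ) - r₁₂ - r₃₂) * n₂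
      + ((c₃:ℤ) - r₁₃ - r₂₃) * n₃ = 0 := by
    linear_combination E1 + E2 + E3
  have habd : (c₁:ℤ) - r₂₁ - r₃₁ = 0 ∧ (c₂:ℤ) - r₁₂ - r₃₂ = 0 ∧ (c₃:ℤ) - r₁₃ - r₂₃ = 0 := by
    set a : ℤ := (c₁:ℤ) - r₂₁ - r₃₁ with ha
    set b : ℤ := (c₂:ℤ) - r₁₂ - r₃₂ with hb
    set d : ℤ := (c₃:ℤ) - r₁₃ - r₂₃ with hd
    rcases lt_trichotomy a 0 with haz | haz | haz
    · -- a < 0 : (-a) n₁ = b n₂ + d n₃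
      exfalso
      have ta : 0 < (-a) * (n₁:ℤ) := mul_pos (by linarith) hn1
      rcases le_or_gt 0 b with hbz | hbz
      · rcases le_or_gt 0 d with hdz | hdz
        · exact K1 (-a) b d (by linarith [hsum]) (by linarith) (by linarith) hbz hdz
        · have td : 0 < (-d) * (n₃:ℤ) := mul_pos (by linarith) hn3
          have hb0 : 0 < b := posfac _ _ hn2 (by linarith [hsum])
          exact K2 b (-a) (-d) (by linarith [hsum]) hb0 (by linarith) (by linarith) (by linarith)
      · have tb : 0 < (-b) * (n₂:ℤ) := mul_pos (by linarith) hn2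
        have hd0 : 0 < d := posfac _ _ hn3 (by linarith [hsum])
        exact K3 d (-a) (-b) (by linarith [hsum]) hd0 (by linarith) (by linarith) (by linarith)
    · -- a = 0
      rw [haz] at hsum
      have hsum0 : b * (n₂:ℤ) + d * n₃ = 0 := by linarith [hsum]
      rcases lt_trichotomy b 0 with hbz | hbz | hbz
      · exfalso
        have tb : 0 < (-b) * (n₂:ℤ) := mul_pos (by linarith) hn2
        have hd0 : 0 < d := posfac _ _ hn3 (by linarith)
        exact K3 d 0 (-b) (by linarith) hd0 (by linarith) le_rfl (by linarith)
      · refine ⟨haz, hbz, ?_⟩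
        rw [hbz] at hsum0
        have : d * (n₃:ℤ) = 0 := by linarith
        rcases mul_eq_zero.mp this with h | h
        · exact h
        · exfalso; linarith
      · exfalso
        have tb : 0 < b * (n₂:ℤ) := mul_pos hbz hn2
        have hd0 : 0 < -d := posfac _ _ hn3 (by linarith)
        exact K3 (-d) 0 b (by linarith) hd0 (by linarith) le_rfl (by linarith)
    · -- a > 0
      exfalso
      have ta : 0 < a * (n₁:ℤ) := mul_pos haz hn1
      rcases le_or_gt b 0 with hbz | hbz
      · rcases le_or_gt d 0 with hdz | hdz
        · exact K1 a (-b) (-d) (by linarith [hsum]) haz (by linarith) (by linarith) (by linarith)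
        · have td : 0 < d * (n₃:ℤ) := mul_pos hdz hn3
          have hb0 : 0 < -b := posfac _ _ hn2 (by linarith [hsum])
          exact K2 (-b) a d (by linarith [hsum]) hb0 (by linarith) (by linarith) (by linarith)
      · have tb : 0 < b * (n₂:ℤ) := mul_pos hbz hn2
        have hd0 : 0 < -d := posfac _ _ hn3 (by linarith [hsum])
        exact K3 (-d) a b (by linarith [hsum]) hd0 (by linarith) (by linarith) (by linarith)
  have hB1 : (c₁:ℤ) = r₂₁ + r₃₁ := by linarith [habd.1]
  have hB2 : (c₂:ℤ) = r₁₂ + r₃₂ := by linarith [habd.2.1]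
  have hB3 : (c₃:ℤ) = r₁₃ + r₂₃ := by linarith [habd.2.2]
  -- the lattice of relations is generated by v₂ = (-r₂₁, c₂, -r₂₃) and v₃ = (-r₃₁, -r₃₂, c₃)
  have hlat : ∀ u1 u2 u3 : ℤ, u1 * n₁ + u2 * n₂ + u3 * n₃ = 0 →
      ∃ s t : ℤ, u1 = -(s * r₂₁) - t * r₃₁ ∧ u2 = s * c₂ - t * r₃₂ ∧ u3 = -(s * r₂₃) + t * c₃ := by
    intro u1 u2 u3 hu
    obtain ⟨D, hDdef⟩ : ∃ D : ℤ, D = (c₂:ℤ) * c₃ - r₂₃ * r₃₂ := ⟨_, rfl⟩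
    have hprod : (r₂₃:ℤ) * r₃₂ < c₃ * c₂ :=
      mul_lt_mul'' A23 A32 (by linarith) (by linarith)
    have hD : 0 < D := by rw [hDdef]; linarith [hprod]
    have hDne : D ≠ 0 := ne_of_gt hD
    obtain ⟨s0, p, hPe, hp0, hpD⟩ : ∃ s0 p : ℤ,
        u2 * c₃ + u3 * r₃₂ = D * s0 + p ∧ 0 ≤ p ∧ p < D :=
      ⟨(u2 * c₃ + u3 * r₃₂) / D, (u2 * c₃ + u3 * r₃₂) % D,
        (Int.mul_ediv_add_emod _ D).symm, Int.emod_nonneg _ hDne, Int.emod_lt_of_pos _ hD⟩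
    obtain ⟨t0, q, hQe, hq0, hqD⟩ : ∃ t0 q : ℤ,
        u2 * r₂₃ + u3 * c₂ = D * t0 + q ∧ 0 ≤ q ∧ q < D :=
      ⟨(u2 * r₂₃ + u3 * c₂) / D, (u2 * r₂₃ + u3 * c₂) % D,
        (Int.mul_ediv_add_emod _ D).symm, Int.emod_nonneg _ hDne, Int.emod_lt_of_pos _ hD⟩
    obtain ⟨w1, hw1d⟩ : ∃ w : ℤ, w = u1 + s0 * r₂₁ + t0 * r₃₁ := ⟨_, rfl⟩
    obtain ⟨w2, hw2d⟩ : ∃ w : ℤ, w = u2 - s0 * c₂ + t0 * r₃₂ := ⟨_, rfl⟩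
    obtain ⟨w3, hw3d⟩ : ∃ w : ℤ, w = u3 + s0 * r₂₃ - t0 * c₃ := ⟨_, rfl⟩
    have hw2 : D * w2 = p * c₂ - q * r₃₂ := by
      linear_combination D * hw2d + (c₂:ℤ) * hPe - (r₃₂:ℤ) * hQe + u2 * hDdef
    have hw3 : D * w3 = -(p * r₂₃) + q * c₃ := by
      linear_combination D * hw3d - (r₂₃:ℤ) * hPe + (c₃:ℤ) * hQe + u3 * hDdef
    have hw1 : D * w1 = -(p * r₂₁) - q * r₃₁ := by
      have h0 : (n₁:ℤ) * (D * w1 + p * r₂₁ + q * r₃₁) = 0 := by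
        linear_combination (n₁:ℤ) * D * hw1d - (n₁:ℤ) * (r₂₁:ℤ) * hPe - (n₁:ℤ) * (r₃₁:ℤ) * hQe
          + D * hu - (u2 * (c₃:ℤ) + u3 * (r₃₂:ℤ)) * E2 - (u2 * (r₂₃:ℤ) + u3 * (c₂:ℤ)) * E3
          - (u2 * (n₂:ℤ) + u3 * (n₃:ℤ)) * hDdef
      rcases mul_eq_zero.mp h0 with h | h
      · exact absurd h (ne_of_gt hn1)
      · linarith
    by_cases hpq : p = 0 ∧ q = 0
    · obtain ⟨hp', hq'⟩ := hpq
      subst hp'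
      subst hq'
      have z1 : w1 = 0 := by
        rcases mul_eq_zero.mp (show D * w1 = 0 by rw [hw1]; ring) with h | h
        · exact absurd h hDne
        · exact h
      have z2 : w2 = 0 := by
        rcases mul_eq_zero.mp (show D * w2 = 0 by rw [hw2]; ring) with h | h
        · exact absurd h hDne
        · exact h
      have z3 : w3 = 0 := by
        rcases mul_eq_zero.mp (show D * w3 = 0 by rw [hw3]; ring) with h | h
        · exact absurd h hDne
        · exact h
      refine ⟨s0, t0, ?_, ?_, ?_⟩
      · rw [z1] at hw1d; linarith
      · rw [z2] at hw2d; linarith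
      · rw [z3] at hw3d; linarith
    · exfalso
      have hpq' : 0 < p + q := by
        rcases eq_or_lt_of_le hp0 with h | h
        · rcases eq_or_lt_of_le hq0 with h' | h'
          · exact absurd ⟨h.symm, h'.symm⟩ hpq
          · linarith
        · linarith
      have m1 : p ≤ p * (r₂₁:ℤ) := le_mul_of_one_le_right hp0 p21
      have m2 : q ≤ q * (r₃₁:ℤ) := le_mul_of_one_le_right hq0 p31
      have hw1neg : w1 < 0 := by
        have hDw1 : D * w1 < 0 := by rw [hw1]; linarith
        by_contra hcon
        push_neg at hcon
        have : 0 ≤ D * w1 := mul_nonneg hD.le hcon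
        linarith
      have m3 : p * (r₂₁:ℤ) ≤ (D - 1) * r₂₁ :=
        mul_le_mul_of_nonneg_right (by linarith) (by linarith)
      have m4 : q * (r₃₁:ℤ) ≤ (D - 1) * r₃₁ :=
        mul_le_mul_of_nonneg_right (by linarith) (by linarith)
      have m5 : (D - 1) * (c₁:ℤ) = (D - 1) * r₂₁ + (D - 1) * r₃₁ := by rw [hB1]; ring
      have hw1c : -w1 < c₁ := by
        have h5 : D * (-w1) < D * c₁ := by
          have : D * (-w1) = p * r₂₁ + q * r₃₁ := by linarith [hw1]
          linarith [this, m3, m4, m5]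
        exact (mul_lt_mul_iff_right₀ hD).mp h5
      have hwrel : w1 * n₁ + w2 * n₂ + w3 * n₃ = 0 := by
        have h6 : D * (w1 * n₁ + w2 * n₂ + w3 * n₃) = 0 := by
          linear_combination (n₁:ℤ) * hw1 + (n₂:ℤ) * hw2 + (n₃:ℤ) * hw3 + p * E2 + q * E3
        rcases mul_eq_zero.mp h6 with h | h
        · exact absurd h hDne
        · exact h
      have m6 : 0 ≤ q * (r₃₂:ℤ) := mul_nonneg hq0 (by linarith)
      have m7 : p * (c₂:ℤ) ≤ (D - 1) * c₂ :=
        mul_le_mul_of_nonneg_right (by linarith) (by linarith)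
      have hw2c : w2 < c₂ := by
        refine (mul_lt_mul_iff_right₀ hD).mp ?_
        have e : (D - 1) * (c₂:ℤ) = D * c₂ - c₂ := by ring
        linarith [hw2, m6, m7, e]
      have m8 : 0 ≤ p * (r₂₃:ℤ) := mul_nonneg hp0 (by linarith)
      have m9 : q * (c₃:ℤ) ≤ (D - 1) * c₃ :=
        mul_le_mul_of_nonneg_right (by linarith) (by linarith)
      have hw3c : w3 < c₃ := by
        refine (mul_lt_mul_iff_right₀ hD).mp ?_
        have e : (D - 1) * (c₃:ℤ) = D * c₃ - c₃ := by ring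
        linarith [hw3, m8, m9, e]
      have hx1 : 0 < -w1 := by linarith
      rcases le_or_gt 0 w2 with h2' | h2'
      · rcases le_or_gt 0 w3 with h3' | h3'
        · exact K1 (-w1) w2 w3 (by linarith [hwrel]) hx1 (by linarith) h2' h3'
        · have t1 : 0 < (-w1) * (n₁:ℤ) := mul_pos hx1 hn1
          have t2 : 0 < (-w3) * (n₃:ℤ) := mul_pos (by linarith) hn3
          have hw2pos : 0 < w2 := posfac _ _ hn2 (by linarith [hwrel])
          exact K2 w2 (-w1) (-w3) (by linarith [hwrel]) hw2pos (by linarith) (by linarith)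
            (by linarith)
      · have t1 : 0 < (-w1) * (n₁:ℤ) := mul_pos hx1 hn1
        have t2 : 0 < (-w2) * (n₂:ℤ) := mul_pos (by linarith) hn2
        have hw3pos : 0 < w3 := posfac _ _ hn3 (by linarith [hwrel])
        exact K3 w3 (-w1) (-w2) (by linarith [hwrel]) hw3pos (by linarith) (by linarith)
          (by linarith)
  -- the key non-membership lemma (on the level of lattice vectors)
  have hN' : ∀ u1 u2 u3 : ℤ, u1 * n₁ + u2 * n₂ + u3 * n₃ = 0 → u1 < 0 →
      (u2 < r₁₂ ∧ u3 < c₃ ∨ u2 < c₂ ∧ u3 < r₁₃) → False := by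
    intro u1 u2 u3 hu hu1 hL
    obtain ⟨s, t, h1, h2, h3⟩ := hlat u1 u2 u3 hu
    have hst : 0 < s * r₂₁ + t * r₃₁ := by linarith
    rcases le_or_gt s 0 with hs | hs
    · rcases le_or_gt t 0 with ht | ht
      · have t1 : s * (r₂₁:ℤ) ≤ 0 := mul_nonpos_iff.mpr (Or.inr ⟨hs, by linarith⟩)
        have t2 : t * (r₃₁:ℤ) ≤ 0 := mul_nonpos_iff.mpr (Or.inr ⟨ht, by linarith⟩)
        linarith
      · have t1 : (c₃:ℤ) ≤ t * c₃ := le_mul_of_one_le_left (by linarith) (by linarith)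
        have t2 : s * (r₂₃:ℤ) ≤ 0 := mul_nonpos_iff.mpr (Or.inr ⟨hs, by linarith⟩)
        have hu3 : (c₃:ℤ) ≤ u3 := by linarith
        rcases hL with ⟨_, h⟩ | ⟨_, h⟩ <;> linarith
    · rcases le_or_gt t 0 with ht | ht
      · have t1 : (c₂:ℤ) ≤ s * c₂ := le_mul_of_one_le_left (by linarith) (by linarith)
        have t2 : t * (r₃₂:ℤ) ≤ 0 := mul_nonpos_iff.mpr (Or.inr ⟨ht, by linarith⟩)
        have hu2 : (c₂:ℤ) ≤ u2 := by linarith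
        rcases hL with ⟨h, _⟩ | ⟨h, _⟩ <;> linarith
      · rcases lt_trichotomy s t with hst2 | hst2 | hst2
        · have t1 : (s + 1) * (c₃:ℤ) ≤ t * c₃ :=
            mul_le_mul_of_nonneg_right (by linarith) (by linarith)
          have t2 : 0 ≤ s * ((c₃:ℤ) - r₂₃) := mul_nonneg (by linarith) (by linarith)
          have hu3 : (c₃:ℤ) ≤ u3 := by linarith [t1, t2, h3]
          rcases hL with ⟨_, h⟩ | ⟨_, h⟩ <;> linarith
        · subst hst2
          have t1 : (c₂:ℤ) - r₃₂ ≤ s * ((c₂:ℤ) - r₃₂) :=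
            le_mul_of_one_le_left (by linarith) (by linarith)
          have t2 : (c₃:ℤ) - r₂₃ ≤ s * ((c₃:ℤ) - r₂₃) :=
            le_mul_of_one_le_left (by linarith) (by linarith)
          have hu2 : (r₁₂:ℤ) ≤ u2 := by linarith [t1, h2, hB2]
          have hu3 : (r₁₃:ℤ) ≤ u3 := by linarith [t2, h3, hB3]
          rcases hL with ⟨h, _⟩ | ⟨_, h⟩ <;> linarith
        · have t1 : (t + 1) * (c₂:ℤ) ≤ s * c₂ :=
            mul_le_mul_of_nonneg_right (by linarith) (by linarith)
          have t2 : 0 ≤ t * ((c₂:ℤ) - r₃₂) := mul_nonneg (by linarith) (by linarith)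
          have hu2 : (c₂:ℤ) ≤ u2 := by linarith [t1, t2, h2]
          rcases hL with ⟨h, _⟩ | ⟨h, _⟩ <;> linarith
  have hSmem : ∀ m : ℕ, m ∈ S ↔ ∃ x y z : ℕ, x * n₁ + y * n₂ + z * n₃ = m := by
    intro m; rw [hS]; exact psf_trip n₁ n₂ n₃ m
  have hZ : ∀ p q r : ℤ, 0 ≤ p → 0 ≤ q → 0 ≤ r →
      S.zmem (p * n₁ + q * n₂ + r * n₃) := by
    intro p q r hp hq hr
    lift p to ℕ using hp
    lift q to ℕ using hq
    lift r to ℕ using hr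
    exact ⟨p * n₁ + q * n₂ + r * n₃, (hSmem _).mpr ⟨p, q, r, rfl⟩, by push_cast; ring⟩
  have hN : ∀ y z w : ℤ, 0 ≤ y → 0 ≤ z →
      (y < r₁₂ ∧ z < c₃ ∨ y < c₂ ∧ z < r₁₃) → w = y * n₂ + z * n₃ - n₁ →
      S.zmem w → False := by
    rintro y z w hy hz hL hw ⟨m, hm, hcast⟩
    obtain ⟨a, b, c, habc⟩ := (hSmem m).mp hm
    have hcast2 : (a:ℤ) * n₁ + b * n₂ + c * n₃ = y * n₂ + z * n₃ - n₁ := by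
      rw [← hw, ← hcast, ← habc]; push_cast; ring
    have hb0 : (0:ℤ) ≤ (b:ℤ) := Int.natCast_nonneg b
    have hc0 : (0:ℤ) ≤ (c:ℤ) := Int.natCast_nonneg c
    have ha0 : (0:ℤ) ≤ (a:ℤ) := Int.natCast_nonneg a
    refine hN' (-((a:ℤ) + 1)) (y - b) (z - c) (by linarith [hcast2]) (by linarith) ?_
    rcases hL with ⟨hL1, hL2⟩ | ⟨hL1, hL2⟩
    · exact Or.inl ⟨by linarith, by linarith⟩
    · exact Or.inr ⟨by linarith, by linarith⟩
  -- Now the main set equality.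
  ext x
  simp only [pseudoFrobeniusSet, Set.mem_setOf_eq, Set.mem_insert_iff, Set.mem_singleton_iff]
  constructor
  · rintro ⟨hxnot, hstep⟩
    have hn1S : n₁ ∈ S := by
      rw [hS]; exact AddSubmonoid.subset_closure (by simp)
    have hn2S : n₂ ∈ S := by
      rw [hS]; exact AddSubmonoid.subset_closure (by simp)
    have hn3S : n₃ ∈ S := by
      rw [hS]; exact AddSubmonoid.subset_closure (by simp)
    obtain ⟨m, hm, hcast⟩ := hstep n₁ hn1S (by omega)
    obtain ⟨a, b, c, habc⟩ := (hSmem m).mp hm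
    have hx1 : (a:ℤ) * n₁ + b * n₂ + c * n₃ = x + n₁ := by
      rw [← hcast, ← habc]; push_cast; ring
    have hb0 : (0:ℤ) ≤ (b:ℤ) := Int.natCast_nonneg b
    have hc0 : (0:ℤ) ≤ (c:ℤ) := Int.natCast_nonneg c
    rcases Nat.eq_zero_or_pos a with haz | haz
    · subst haz
      have hx : x = (b:ℤ) * n₂ + c * n₃ - n₁ := by
        push_cast at hx1; linarith [hx1]
      have hb2 : b < c₂ := by
        by_contra hcon
        push_neg at hcon
        apply hxnot
        have hzm := hZ ((r₂₁:ℤ) - 1) ((b:ℤ) - c₂) ((c:ℤ) + r₂₃)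
          (by linarith) (by omega) (by linarith)
        have hxe : x = ((r₂₁:ℤ) - 1) * n₁ + ((b:ℤ) - c₂) * n₂ + ((c:ℤ) + r₂₃) * n₃ := by
          rw [hx]; linear_combination E2
        rwa [← hxe] at hzm
      have hc3b : c < c₃ := by
        by_contra hcon
        push_neg at hcon
        apply hxnot
        have hzm := hZ ((r₃₁:ℤ) - 1) ((b:ℤ) + r₃₂) ((c:ℤ) - c₃)
          (by linarith) (by linarith) (by omega)
        have hxe : x = ((r₃₁:ℤ) - 1) * n₁ + ((b:ℤ) + r₃₂) * n₂ + ((c:ℤ) - c₃) * n₃ := by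
          rw [hx]; linear_combination E3
        rwa [← hxe] at hzm
      have hnotboth : ¬(r₁₂ ≤ b ∧ r₁₃ ≤ c) := by
        rintro ⟨hu', hv'⟩
        apply hxnot
        have hzm := hZ ((c₁:ℤ) - 1) ((b:ℤ) - r₁₂) ((c:ℤ) - r₁₃)
          (by linarith) (by omega) (by omega)
        have hxe : x = ((c₁:ℤ) - 1) * n₁ + ((b:ℤ) - r₁₂) * n₂ + ((c:ℤ) - r₁₃) * n₃ := by
          rw [hx]; linear_combination - E1
        rwa [← hxe] at hzm
      by_cases hcor1 : b + 1 = r₁₂ ∧ c + 1 = c₃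
      · left
        obtain ⟨hcb, hcc⟩ := hcor1
        have hb' : (r₁₂:ℤ) = (b:ℤ) + 1 := by omega
        have hc' : (c₃:ℤ) = (c:ℤ) + 1 := by omega
        rw [hx, hb', hc']; ring
      · by_cases hcor2 : b + 1 = c₂ ∧ c + 1 = r₁₃
        · right
          obtain ⟨hcb, hcc⟩ := hcor2
          have hb' : (c₂:ℤ) = (b:ℤ) + 1 := by omega
          have hc' : (r₁₃:ℤ) = (c:ℤ) + 1 := by omega
          rw [hx, hb', hc']; ring
        · exfalso
          have hLnat : (b < r₁₂ ∧ c < c₃) ∨ (b < c₂ ∧ c < r₁₃) := by omega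
          have hnext : ((b + 1 < r₁₂ ∧ c < c₃) ∨ (b + 1 < c₂ ∧ c < r₁₃)) ∨
              ((b < r₁₂ ∧ c + 1 < c₃) ∨ (b < c₂ ∧ c + 1 < r₁₃)) := by omega
          rcases hnext with h | h
          · obtain ⟨m2, hm2, hcast2⟩ := hstep n₂ hn2S (by omega)
            refine hN ((b:ℤ) + 1) (c:ℤ) (x + n₂) (by linarith) (by linarith) ?_
              (by rw [hx]; ring) ⟨m2, hm2, hcast2⟩
            rcases h with ⟨e1', e2'⟩ | ⟨e1', e2'⟩
            · exact Or.inl ⟨by omega, by omega⟩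
            · exact Or.inr ⟨by omega, by omega⟩
          · obtain ⟨m2, hm2, hcast2⟩ := hstep n₃ hn3S (by omega)
            refine hN (b:ℤ) ((c:ℤ) + 1) (x + n₃) (by linarith) (by linarith) ?_
              (by rw [hx]; ring) ⟨m2, hm2, hcast2⟩
            rcases h with ⟨e1', e2'⟩ | ⟨e1', e2'⟩
            · exact Or.inl ⟨by omega, by omega⟩
            · exact Or.inr ⟨by omega, by omega⟩
    · exfalso
      apply hxnot
      have hzm := hZ ((a:ℤ) - 1) (b:ℤ) (c:ℤ) (by omega) hb0 hc0
      have hxe : x = ((a:ℤ) - 1) * n₁ + (b:ℤ) * n₂ + (c:ℤ) * n₃ := by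
        linear_combination -hx1
      rwa [← hxe] at hzm
  · intro hx
    rcases hx with hx | hx <;> subst hx <;> constructor
    · -- f₁ is not in S
      intro hmem
      exact hN ((r₁₂:ℤ) - 1) ((c₃:ℤ) - 1) _ (by linarith) (by linarith)
        (Or.inl ⟨by linarith, by linarith⟩) (by ring) hmem
    · -- f₁ + s ∈ S for every nonzero s ∈ S
      intro s hsS hs0
      obtain ⟨a, b, c, habc⟩ := (hSmem s).mp hsS
      have hsz : ((c₃:ℤ) - 1) * n₃ + ((r₁₂:ℤ) - 1) * n₂ - n₁ + s
          = ((c₃:ℤ) - 1) * n₃ + ((r₁₂:ℤ) - 1) * n₂ - n₁ + ((a:ℤ) * n₁ + b * n₂ + c * n₃) := by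
        rw [show ((s:ℕ):ℤ) = ((a:ℤ) * n₁ + b * n₂ + c * n₃) from by exact_mod_cast habc.symm]
      rcases Nat.eq_zero_or_pos a with haz | haz
      · subst haz
        rcases Nat.eq_zero_or_pos b with hbz | hbz
        · subst hbz
          have hcz : 0 < c := by
            rcases Nat.eq_zero_or_pos c with h | h
            · subst h; exfalso; apply hs0; simpa using habc.symm
            · exact h
          have hzm := hZ ((r₃₁:ℤ) - 1) ((c₂:ℤ) - 1) ((c:ℤ) - 1)
            (by linarith) (by linarith) (by omega)
          have hxe : ((c₃:ℤ) - 1) * n₃ + ((r₁₂:ℤ) - 1) * n₂ - n₁ + s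
              = ((r₃₁:ℤ) - 1) * n₁ + ((c₂:ℤ) - 1) * n₂ + ((c:ℤ) - 1) * n₃ := by
            rw [hsz]; linear_combination E3 - (n₂:ℤ) * hB2
          rwa [← hxe] at hzm
        · have hzm := hZ ((c₁:ℤ) - 1) ((b:ℤ) - 1) ((c:ℤ) + r₂₃ - 1)
            (by linarith) (by omega) (by linarith)
          have hxe : ((c₃:ℤ) - 1) * n₃ + ((r₁₂:ℤ) - 1) * n₂ - n₁ + s
              = ((c₁:ℤ) - 1) * n₁ + ((b:ℤ) - 1) * n₂ + ((c:ℤ) + r₂₃ - 1) * n₃ := by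
            rw [hsz]; linear_combination - E1 + (n₃:ℤ) * hB3
          rwa [← hxe] at hzm
      · have hzm := hZ ((a:ℤ) - 1) ((b:ℤ) + r₁₂ - 1) ((c:ℤ) + c₃ - 1)
          (by omega) (by linarith) (by linarith)
        have hxe : ((c₃:ℤ) - 1) * n₃ + ((r₁₂:ℤ) - 1) * n₂ - n₁ + s
            = ((a:ℤ) - 1) * n₁ + ((b:ℤ) + r₁₂ - 1) * n₂ + ((c:ℤ) + c₃ - 1) * n₃ := by
          rw [hsz]; ring
        rwa [← hxe] at hzm
    · -- f₂ is not in S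
      intro hmem
      exact hN ((c₂:ℤ) - 1) ((r₁₃:ℤ) - 1) _ (by linarith) (by linarith)
        (Or.inr ⟨by linarith, by linarith⟩) (by ring) hmem
    · -- f₂ + s ∈ S for every nonzero s ∈ S
      intro s hsS hs0
      obtain ⟨a, b, c, habc⟩ := (hSmem s).mp hsS
      have hsz : ((c₂:ℤ) - 1) * n₂ + ((r₁₃:ℤ) - 1) * n₃ - n₁ + s
          = ((c₂:ℤ) - 1) * n₂ + ((r₁₃:ℤ) - 1) * n₃ - n₁ + ((a:ℤ) * n₁ + b * n₂ + c * n₃) := by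
        rw [show ((s:ℕ):ℤ) = ((a:ℤ) * n₁ + b * n₂ + c * n₃) from by exact_mod_cast habc.symm]
      rcases Nat.eq_zero_or_pos a with haz | haz
      · subst haz
        rcases Nat.eq_zero_or_pos b with hbz | hbz
        · subst hbz
          have hcz : 0 < c := by
            rcases Nat.eq_zero_or_pos c with h | h
            · subst h; exfalso; apply hs0; simpa using habc.symm
            · exact h
          have hzm := hZ ((c₁:ℤ) - 1) ((r₃₂:ℤ) - 1) ((c:ℤ) - 1)
            (by linarith) (by linarith) (by omega)
          have hxe : ((c₂:ℤ) - 1) * n₂ + ((r₁₃:ℤ) - 1) * n₃ - n₁ + s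
              = ((c₁:ℤ) - 1) * n₁ + ((r₃₂:ℤ) - 1) * n₂ + ((c:ℤ) - 1) * n₃ := by
            rw [hsz]; linear_combination - E1 + (n₂:ℤ) * hB2
          rwa [← hxe] at hzm
        · have hzm := hZ ((r₂₁:ℤ) - 1) ((b:ℤ) - 1) ((c:ℤ) + c₃ - 1)
            (by linarith) (by omega) (by linarith)
          have hxe : ((c₂:ℤ) - 1) * n₂ + ((r₁₃:ℤ) - 1) * n₃ - n₁ + s
              = ((r₂₁:ℤ) - 1) * n₁ + ((b:ℤ) - 1) * n₂ + ((c:ℤ) + c₃ - 1) * n₃ := by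
            rw [hsz]; linear_combination E2 - (n₃:ℤ) * hB3
          rwa [← hxe] at hzm
      · have hzm := hZ ((a:ℤ) - 1) ((b:ℤ) + c₂ - 1) ((c:ℤ) + r₁₃ - 1)
          (by omega) (by linarith) (by linarith)
        have hxe : ((c₂:ℤ) - 1) * n₂ + ((r₁₃:ℤ) - 1) * n₃ - n₁ + s
            = ((a:ℤ) - 1) * n₁ + ((b:ℤ) + c₂ - 1) * n₂ + ((c:ℤ) + r₁₃ - 1) * n₃ := by
          rw [hsz]; ring
        rwa [← hxe] at hzm
end

section
/- Let S = ⟨n_1,n_2,n_3⟩ be a numerical semigroup minimally generated by n_1 < n_2 < n_3 with gcd(n_1,n_2,n_3)=1 which is not symmetric. For {i,j,k} = {1,2,3} let c_i be the minimal positive integer with c_i n_i ∈ ⟨n_j, n_k⟩, and let r_{i,j}, r_{i,k} be the (unique) positive integers with c_i n_i = r_{i,j} n_j + r_{i,k} n_k. Then n_1 = r_{1,2}r_{1,3} + r_{1,2}r_{2,3} + r_{1,3}r_{3,2}, n_2 = r_{1,3}r_{2,1} + r_{2,1}r_{2,3} + r_{2,3}r_{3,1}, and n_3 = r_{1,2}r_{3,1}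 + r_{2,1}r_{3,2} + r_{3,1}r_{3,2}. -/
lemma memPair (x y a b : ℕ) : a * x + b * y ∈ AddSubmonoid.closure ({x, y} : Set ℕ) := by
  rw [AddSubmonoid.mem_closure_pair]
  exact ⟨a, b, by simp [nsmul_eq_mul]⟩

lemma auxLt (x y z cx cy rxy rxz ryx ryz : ℕ) (Sx : AddSubmonoid ℕ)
    (hx : 0 < x) (hz : 0 < z)
    (hmem : ∀ a b : ℕ, a * y + b * z ∈ Sx)
    (hmin : ∀ c : ℕ, 0 < c → c * x ∈ Sx → cx ≤ c)
    (hEx : cx * x = rxy * y + rxz * z)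
    (hEy : cy * y = ryx * x + ryz * z)
    (hryx : 0 < ryx) (hryz : 0 < ryz) : rxy < cy := by
  by_contra hcon
  push_neg at hcon
  have E1 : (cx : ℤ) * x = rxy * y + rxz * z := by exact_mod_cast hEx
  have E2 : (cy : ℤ) * y = ryx * x + ryz * z := by exact_mod_cast hEy
  have hzZ : (0:ℤ) < z := by exact_mod_cast hz
  have hxZ : (0:ℤ) < x := by exact_mod_cast hx
  have hconZ : (cy:ℤ) ≤ rxy := by exact_mod_cast hcon
  have hryzZ : (1:ℤ) ≤ ryz := by exact_mod_cast hryz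
  have hlt : ryx < cx := by
    have h2 : (ryx:ℤ) < cx := by
      nlinarith [mul_nonneg (show (0:ℤ) ≤ rxz from by positivity) (le_of_lt hzZ),
        mul_le_mul_of_nonneg_right hconZ (show (0:ℤ) ≤ y from by positivity),
        mul_le_mul_of_nonneg_right hryzZ (le_of_lt hzZ)]
    exact_mod_cast h2
  have heq : (cx - ryx) * x = (rxy - cy) * y + (rxz + ryz) * z := by
    zify [le_of_lt hlt, hcon]
    linarith
  have hmem' : (cx - ryx) * x ∈ Sx := heq ▸ hmem _ _
  have := hmin (cx - ryx) (by omega) hmem'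
  omega

set_option maxHeartbeats 2000000 in
/-- for `S = ⟨n₁,n₂,n₃⟩` minimally generated, not symmetric, with
the standard `cᵢ`, `r_{i,j}` setup, the generators are recovered from the `r_{i,j}`:
`n₁ = r₁₂r₁₃ + r₁₂r₂₃ + r₁₃r₃₂`, `n₂ = r₁₃r₂₁ + r₂₁r₂₃ + r₂₃r₃₁`,
`n₃ = r₁₂r₃₁ + r₂₁r₃₂ + r₃₁r₃₂`. -/
theorem stmt10
    (n₁ n₂ n₃ : ℕ)
    (h1 : 0 < n₁) (h12 : n₁ < n₂) (h23 : n₂ < n₃)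
    (hgcd : Nat.gcd n₁ (Nat.gcd n₂ n₃) = 1)
    (hmin1 : n₁ ∉ AddSubmonoid.closure {n₂, n₃})
    (hmin2 : n₂ ∉ AddSubmonoid.closure {n₁, n₃})
    (hmin3 : n₃ ∉ AddSubmonoid.closure {n₁, n₂})
    (S : AddSubmonoid ℕ) (hS : S = AddSubmonoid.closure {n₁, n₂, n₃})
    (hnotsym : ¬ ∀ x : ℤ, ¬ S.zmem x ↔ S.zmem (frobeniusNumber S - x))
    (c₁ c₂ c₃ : ℕ)
    (hc₁ : 0 < c₁ ∧ c₁ * n₁ ∈ AddSubmonoid.closure {n₂, n₃} ∧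
      ∀ c : ℕ, 0 < c → c * n₁ ∈ AddSubmonoid.closure {n₂, n₃} → c₁ ≤ c)
    (hc₂ : 0 < c₂ ∧ c₂ * n₂ ∈ AddSubmonoid.closure {n₁, n₃} ∧
      ∀ c : ℕ, 0 < c → c * n₂ ∈ AddSubmonoid.closure {n₁, n₃} → c₂ ≤ c)
    (hc₃ : 0 < c₃ ∧ c₃ * n₃ ∈ AddSubmonoid.closure {n₁, n₂} ∧
      ∀ c : ℕ, 0 < c → c * n₃ ∈ AddSubmonoid.closure {n₁, n₂} → c₃ ≤ c)
    (r₁₂ r₁₃ r₂₁ r₂₃ r₃₁ r₃₂ : ℕ)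
    (hr₁ : 0 < r₁₂ ∧ 0 < r₁₃ ∧ c₁ * n₁ = r₁₂ * n₂ + r₁₃ * n₃)
    (hr₂ : 0 < r₂₁ ∧ 0 < r₂₃ ∧ c₂ * n₂ = r₂₁ * n₁ + r₂₃ * n₃)
    (hr₃ : 0 < r₃₁ ∧ 0 < r₃₂ ∧ c₃ * n₃ = r₃₁ * n₁ + r₃₂ * n₂)
    : n₁ = r₁₂ * r₁₃ + r₁₂ * r₂₃ + r₁₃ * r₃₂ ∧
      n₂ = r₁₃ * r₂₁ + r₂₁ * r₂₃ + r₂₃ * r₃₁ ∧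
      n₃ = r₁₂ * r₃₁ + r₂₁ * r₃₂ + r₃₁ * r₃₂ := by
  obtain ⟨hr₁₂, hr₁₃, e₁⟩ := hr₁
  obtain ⟨hr₂₁, hr₂₃, e₂⟩ := hr₂
  obtain ⟨hr₃₁, hr₃₂, e₃⟩ := hr₃
  have h2 : 0 < n₂ := h1.trans h12
  have h3 : 0 < n₃ := h2.trans h23
  -- six inequalities r_{i,j} < c_j
  have e₁' : c₁ * n₁ = r₁₃ * n₃ + r₁₂ * n₂ := by rw [e₁]; ring
  have e₂' : c₂ * n₂ = r₂₃ * n₃ + r₂₁ * n₁ := by rw [e₂]; ring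
  have e₃' : c₃ * n₃ = r₃₂ * n₂ + r₃₁ * n₁ := by rw [e₃]; ring
  have memPair' : ∀ x y a b : ℕ, a * y + b * x ∈ AddSubmonoid.closure ({x, y} : Set ℕ) := by
    intro x y a b; rw [add_comm]; exact memPair x y b a
  have L12 : r₁₂ < c₂ :=
    auxLt n₁ n₂ n₃ c₁ c₂ r₁₂ r₁₃ r₂₁ r₂₃ _ h1 h3 (memPair n₂ n₃) hc₁.2.2 e₁ e₂ hr₂₁ hr₂₃
  have L13 : r₁₃ < c₃ :=
    auxLt n₁ n₃ n₂ c₁ c₃ r₁₃ r₁₂ r₃₁ r₃₂ _ h1 h2 (memPair' n₂ n₃) hc₁.2.2 e₁' e₃ hr₃₁ hr₃₂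
  have L21 : r₂₁ < c₁ :=
    auxLt n₂ n₁ n₃ c₂ c₁ r₂₁ r₂₃ r₁₂ r₁₃ _ h2 h3 (memPair n₁ n₃) hc₂.2.2 e₂ e₁ hr₁₂ hr₁₃
  have L23 : r₂₃ < c₃ :=
    auxLt n₂ n₃ n₁ c₂ c₃ r₂₃ r₂₁ r₃₂ r₃₁ _ h2 h1 (memPair' n₁ n₃) hc₂.2.2 e₂' e₃' hr₃₂ hr₃₁
  have L31 : r₃₁ < c₁ :=
    auxLt n₃ n₁ n₂ c₃ c₁ r₃₁ r₃₂ r₁₃ r₁₂ _ h3 h2 (memPair n₁ n₂) hc₃.2.2 e₃ e₁' hr₁₃ hr₁₂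
  have L32 : r₃₂ < c₂ :=
    auxLt n₃ n₂ n₁ c₃ c₂ r₃₂ r₃₁ r₂₃ r₂₁ _ h3 h1 (memPair' n₁ n₂) hc₃.2.2 e₃' e₂' hr₂₃ hr₂₁
  -- integer versions
  have E1 : (c₁:ℤ) * n₁ = r₁₂ * n₂ + r₁₃ * n₃ := by exact_mod_cast e₁
  have E2 : (c₂:ℤ) * n₂ = r₂₁ * n₁ + r₂₃ * n₃ := by exact_mod_cast e₂
  have E3 : (c₃:ℤ) * n₃ = r₃₁ * n₁ + r₃₂ * n₂ := by exact_mod_cast e₃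
  -- c_i ≤ sums
  have hle1 : c₁ ≤ r₂₁ + r₃₁ := by
    have heq : (r₂₁ + r₃₁) * n₁ = (c₂ - r₃₂) * n₂ + (c₃ - r₂₃) * n₃ := by
      zify [le_of_lt L32, le_of_lt L23]; linarith
    exact hc₁.2.2 _ (by omega) (heq ▸ memPair n₂ n₃ _ _)
  have hle2 : c₂ ≤ r₁₂ + r₃₂ := by
    have heq : (r₁₂ + r₃₂) * n₂ = (c₁ - r₃₁) * n₁ + (c₃ - r₁₃) * n₃ := by
      zify [le_of_lt L31, le_of_lt L13]; linarith
    exact hc₂.2.2 _ (by omega) (heq ▸ memPair n₁ n₃ _ _)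
  have hle3 : c₃ ≤ r₁₃ + r₂₃ := by
    have heq : (r₁₃ + r₂₃) * n₃ = (c₁ - r₂₁) * n₁ + (c₂ - r₁₂) * n₂ := by
      zify [le_of_lt L21, le_of_lt L12]; linarith
    exact hc₃.2.2 _ (by omega) (heq ▸ memPair n₁ n₂ _ _)
  -- equalities c_i = sums
  have hn1Z : (0:ℤ) < n₁ := by exact_mod_cast h1
  have hn2Z : (0:ℤ) < n₂ := by exact_mod_cast h2
  have hn3Z : (0:ℤ) < n₃ := by exact_mod_cast h3
  have hsum : ((r₂₁:ℤ) + r₃₁ - c₁) * n₁ + ((r₁₂:ℤ) + r₃₂ - c₂) * n₂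
      + ((r₁₃:ℤ) + r₂₃ - c₃) * n₃ = 0 := by linarith
  have hs₁ : c₁ = r₂₁ + r₃₁ := by
    by_contra hne
    have h1' : (1:ℤ) ≤ (r₂₁:ℤ) + r₃₁ - c₁ := by
      have : c₁ < r₂₁ + r₃₁ := by omega
      push_cast; omega
    have p1 : (1:ℤ) * n₁ ≤ ((r₂₁:ℤ) + r₃₁ - c₁) * n₁ :=
      mul_le_mul_of_nonneg_right h1' (le_of_lt hn1Z)
    have p2 : (0:ℤ) ≤ ((r₁₂:ℤ) + r₃₂ - c₂) * n₂ := mul_nonneg (by push_cast; omega) (le_of_lt hn2Z)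
    have p3 : (0:ℤ) ≤ ((r₁₃:ℤ) + r₂₃ - c₃) * n₃ := mul_nonneg (by push_cast; omega) (le_of_lt hn3Z)
    linarith
  have hs₂ : c₂ = r₁₂ + r₃₂ := by
    by_contra hne
    have h1' : (1:ℤ) ≤ (r₁₂:ℤ) + r₃₂ - c₂ := by
      have : c₂ < r₁₂ + r₃₂ := by omega
      push_cast; omega
    have p1 : (1:ℤ) * n₂ ≤ ((r₁₂:ℤ) + r₃₂ - c₂) * n₂ :=
      mul_le_mul_of_nonneg_right h1' (le_of_lt hn2Z)
    have p2 : (0:ℤ) ≤ ((r₂₁:ℤ) + r₃₁ - c₁) * n₁ := mul_nonneg (by push_cast; omega) (le_of_lt hn1Z)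
    have p3 : (0:ℤ) ≤ ((r₁₃:ℤ) + r₂₃ - c₃) * n₃ := mul_nonneg (by push_cast; omega) (le_of_lt hn3Z)
    linarith
  have hs₃ : c₃ = r₁₃ + r₂₃ := by
    by_contra hne
    have h1' : (1:ℤ) ≤ (r₁₃:ℤ) + r₂₃ - c₃ := by
      have : c₃ < r₁₃ + r₂₃ := by omega
      push_cast; omega
    have p1 : (1:ℤ) * n₃ ≤ ((r₁₃:ℤ) + r₂₃ - c₃) * n₃ :=
      mul_le_mul_of_nonneg_right h1' (le_of_lt hn3Z)
    have p2 : (0:ℤ) ≤ ((r₂₁:ℤ) + r₃₁ - c₁) * n₁ := mul_nonneg (by push_cast; omega) (le_of_lt hn1Z)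
    have p3 : (0:ℤ) ≤ ((r₁₂:ℤ) + r₃₂ - c₂) * n₂ := mul_nonneg (by push_cast; omega) (le_of_lt hn2Z)
    linarith
  -- cross identities
  set N₁ := r₁₂ * r₁₃ + r₁₂ * r₂₃ + r₁₃ * r₃₂ with hN₁
  set N₂ := r₁₃ * r₂₁ + r₂₁ * r₂₃ + r₂₃ * r₃₁ with hN₂
  set N₃ := r₁₂ * r₃₁ + r₂₁ * r₃₂ + r₃₁ * r₃₂ with hN₃
  have hc₁Z : (c₁:ℤ) = r₂₁ + r₃₁ := by exact_mod_cast hs₁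
  have hc₂Z : (c₂:ℤ) = r₁₂ + r₃₂ := by exact_mod_cast hs₂
  have hc₃Z : (c₃:ℤ) = r₁₃ + r₂₃ := by exact_mod_cast hs₃
  have E1s : ((r₂₁:ℤ) + r₃₁) * n₁ = r₁₂ * n₂ + r₁₃ * n₃ := by rw [← hc₁Z]; exact E1
  have E2s : ((r₁₂:ℤ) + r₃₂) * n₂ = r₂₁ * n₁ + r₂₃ * n₃ := by rw [← hc₂Z]; exact E2
  have X12 : N₂ * n₁ = N₁ * n₂ := by
    have h : ((N₂:ℤ)) * n₁ = (N₁:ℤ) * n₂ := by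
      push_cast [hN₁, hN₂]
      linear_combination (r₂₃:ℤ) * E1s - (r₁₃:ℤ) * E2s
    exact_mod_cast h
  have X13 : N₃ * n₁ = N₁ * n₃ := by
    have h : ((N₃:ℤ)) * n₁ = (N₁:ℤ) * n₃ := by
      push_cast [hN₁, hN₃]
      linear_combination ((r₁₂:ℤ) + r₃₂) * E1s + (r₁₂:ℤ) * E2s
    exact_mod_cast h
  -- helper claims from minimality
  have claim1 : ∀ T u v : ℕ, 0 < T → T * n₁ = u * n₂ + v * n₃ → c₁ ≤ T := by
    intro T u v hT h
    exact hc₁.2.2 T hT (h ▸ memPair n₂ n₃ u v)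
  have claim2 : ∀ A u v : ℕ, 0 < A → A < c₂ → A * n₂ = u * n₁ + v * n₃ → False := by
    intro A u v hA hAc h
    have := hc₂.2.2 A hA (h ▸ memPair n₁ n₃ u v); omega
  have claim3 : ∀ B u v : ℕ, 0 < B → B < c₃ → B * n₃ = u * n₁ + v * n₂ → False := by
    intro B u v hB hBc h
    have := hc₃.2.2 B hB (h ▸ memPair n₁ n₂ u v); omega
  -- key injectivity lemma
  have key : ∀ (lam mu lam' mu' : ℕ) (t : ℤ), 0 ≤ t →
      ((lam < c₂ ∧ mu < r₁₃) ∨ (lam < r₁₂ ∧ mu < c₃)) →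
      ((lam' < c₂ ∧ mu' < r₁₃) ∨ (lam' < r₁₂ ∧ mu' < c₃)) →
      (lam : ℤ) * n₂ + mu * n₃ = lam' * n₂ + mu' * n₃ + t * n₁ →
      lam = lam' ∧ mu = mu' := by
    intro lam mu lam' mu' t ht hP hP' heq
    have hlamc : lam < c₂ := by omega
    have hmuc : mu < c₃ := by omega
    set a : ℤ := (lam : ℤ) - lam' with haEq
    set b : ℤ := (mu : ℤ) - mu' with hbEq
    have heq' : a * n₂ + b * n₃ = t * n₁ := by rw [haEq, hbEq]; linarith
    rcases le_or_gt a 0 with ha | ha <;> rcases le_or_gt b 0 with hb | hb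
    · -- a ≤ 0, b ≤ 0
      have q1 : 0 ≤ (-a) * n₂ := mul_nonneg (by linarith) (le_of_lt hn2Z)
      have q2 : 0 ≤ (-b) * n₃ := mul_nonneg (by linarith) (le_of_lt hn3Z)
      have q3 : 0 ≤ t * n₁ := mul_nonneg ht (le_of_lt hn1Z)
      have hA : a * n₂ = 0 := by linarith
      have hB : b * n₃ = 0 := by linarith
      have ha0 : a = 0 := by
        rcases mul_eq_zero.mp hA with h | h
        · exact h
        · exact absurd h (by exact_mod_cast hn2Z.ne')
      have hb0 : b = 0 := by
        rcases mul_eq_zero.mp hB with h | h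
        · exact h
        · exact absurd h (by exact_mod_cast hn3Z.ne')
      omega
    · -- a ≤ 0, b > 0 : contradiction via claim3
      exfalso
      apply claim3 b.toNat t.toNat (-a).toNat (by omega) (by omega)
      have hcast : ((b.toNat * n₃ : ℕ) : ℤ) = ((t.toNat * n₁ + (-a).toNat * n₂ : ℕ) : ℤ) := by
        push_cast [Int.toNat_of_nonneg ht, Int.toNat_of_nonneg (by linarith : (0:ℤ) ≤ -a),
          Int.toNat_of_nonneg (le_of_lt hb)]
        linarith
      exact_mod_cast hcast
    · -- a > 0, b ≤ 0 : contradiction via claim2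
      exfalso
      apply claim2 a.toNat t.toNat (-b).toNat (by omega) (by omega)
      have hcast : ((a.toNat * n₂ : ℕ) : ℤ) = ((t.toNat * n₁ + (-b).toNat * n₃ : ℕ) : ℤ) := by
        push_cast [Int.toNat_of_nonneg ht, Int.toNat_of_nonneg (by linarith : (0:ℤ) ≤ -b),
          Int.toNat_of_nonneg (le_of_lt ha)]
        linarith
      exact_mod_cast hcast
    · -- a > 0, b > 0
      exfalso
      have hpos : 0 < t * n₁ := by
        have := mul_pos ha hn2Z
        have := mul_pos hb hn3Z
        linarith
      have ht1 : 0 < t := by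
        rcases ht.lt_or_eq with h | h
        · exact h
        · rw [← h] at hpos; simp at hpos
      have hc1t : (c₁ : ℤ) ≤ t := by
        have hcast : ((t.toNat * n₁ : ℕ) : ℤ) = ((a.toNat * n₂ + b.toNat * n₃ : ℕ) : ℤ) := by
          push_cast [Int.toNat_of_nonneg ht, Int.toNat_of_nonneg (le_of_lt ha),
            Int.toNat_of_nonneg (le_of_lt hb)]
          linarith
        have := claim1 t.toNat a.toNat b.toNat (by omega) (by exact_mod_cast hcast)
        omega
      rcases le_or_gt (r₁₃ : ℤ) b with hbr | hbr
      · rcases le_or_gt (r₁₂ : ℤ) a with har | har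
        · -- both big: (lam, mu) in forbidden box
          rcases hP with ⟨h, h'⟩ | ⟨h, h'⟩ <;> omega
        · -- a < r₁₂, b ≥ r₁₃ : claim3
          have hid : (b - r₁₃) * n₃ = (t - c₁) * n₁ + (r₁₂ - a) * n₂ := by
            linear_combination heq' + E1
          have hBpos : 0 < b - r₁₃ := by
            rcases lt_or_ge (r₁₃:ℤ) b with h | h
            · omega
            · exfalso
              have hb0 : b - (r₁₃:ℤ) = 0 := by omega
              have q1 : 0 ≤ (t - c₁) * n₁ := mul_nonneg (by linarith) (le_of_lt hn1Z)
              have q2 : 0 < (r₁₂ - a) * n₂ := mul_pos (by linarith) hn2Z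
              rw [hb0, zero_mul] at hid
              linarith
          apply claim3 (b - r₁₃).toNat (t - c₁).toNat (r₁₂ - a).toNat (by omega) (by omega)
          have hcast : (((b - r₁₃).toNat * n₃ : ℕ) : ℤ)
              = (((t - c₁).toNat * n₁ + (r₁₂ - a).toNat * n₂ : ℕ) : ℤ) := by
            push_cast [Int.toNat_of_nonneg (le_of_lt hBpos),
              Int.toNat_of_nonneg (by linarith : (0:ℤ) ≤ t - c₁),
              Int.toNat_of_nonneg (by linarith : (0:ℤ) ≤ (r₁₂:ℤ) - a)]
            linarith
          exact_mod_cast hcast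
      · -- b < r₁₃ : claim2
        have hid : (a - r₁₂) * n₂ = (t - c₁) * n₁ + (r₁₃ - b) * n₃ := by
          linear_combination heq' + E1
        have hApos : 0 < a - r₁₂ := by
          rcases lt_or_ge (r₁₂:ℤ) a with h | h
          · omega
          · exfalso
            have q1 : 0 ≤ (t - c₁) * n₁ := mul_nonneg (by linarith) (le_of_lt hn1Z)
            have q2 : 0 < (r₁₃ - b) * n₃ := mul_pos (by linarith) hn3Z
            have q3 : (a - (r₁₂:ℤ)) * n₂ ≤ 0 :=
              mul_nonpos_of_nonpos_of_nonneg (by linarith) (le_of_lt hn2Z)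
            linarith
        apply claim2 (a - r₁₂).toNat (t - c₁).toNat (r₁₃ - b).toNat (by omega) (by omega)
        have hcast : (((a - r₁₂).toNat * n₂ : ℕ) : ℤ)
            = (((t - c₁).toNat * n₁ + (r₁₃ - b).toNat * n₃ : ℕ) : ℤ) := by
          push_cast [Int.toNat_of_nonneg (le_of_lt hApos),
            Int.toNat_of_nonneg (by linarith : (0:ℤ) ≤ t - c₁),
            Int.toNat_of_nonneg (by linarith : (0:ℤ) ≤ (r₁₃:ℤ) - b)]
          linarith
        exact_mod_cast hcast
  -- the counting argument
  haveI : NeZero n₁ := ⟨h1.ne'⟩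
  classical
  set L : Finset (ℕ × ℕ) :=
    (Finset.range c₂ ×ˢ Finset.range r₁₃) ∪ (Finset.range r₁₂ ×ˢ Finset.Ico r₁₃ c₃) with hL
  have hdisj : Disjoint (Finset.range c₂ ×ˢ Finset.range r₁₃)
      (Finset.range r₁₂ ×ˢ Finset.Ico r₁₃ c₃) := by
    rw [Finset.disjoint_left]
    rintro ⟨u, v⟩ hu hv
    simp only [Finset.mem_product, Finset.mem_range, Finset.mem_Ico] at hu hv
    omega
  have hcardL : L.card = N₁ := by
    rw [hL, Finset.card_union_of_disjoint hdisj, Finset.card_product, Finset.card_product,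
      Finset.card_range, Finset.card_range, Finset.card_range, Nat.card_Ico, hN₁, hs₂, hs₃]
    have h9 : r₁₃ + r₂₃ - r₁₃ = r₂₃ := by omega
    rw [h9]; ring
  have hinj : Set.InjOn (fun p : ℕ × ℕ => ((p.1 * n₂ + p.2 * n₃ : ℕ) : ZMod n₁)) ↑L := by
    rintro ⟨lam, mu⟩ hp ⟨lam', mu'⟩ hq hfeq
    simp only [Finset.mem_coe, hL, Finset.mem_union, Finset.mem_product, Finset.mem_range,
      Finset.mem_Ico] at hp hq
    have hPp : (lam < c₂ ∧ mu < r₁₃) ∨ (lam < r₁₂ ∧ mu < c₃) := by omega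
    have hPq : (lam' < c₂ ∧ mu' < r₁₃) ∨ (lam' < r₁₂ ∧ mu' < c₃) := by omega
    simp only at hfeq
    have hm : (lam * n₂ + mu * n₃) ≡ (lam' * n₂ + mu' * n₃) [MOD n₁] :=
      (ZMod.natCast_eq_natCast_iff _ _ _).mp hfeq
    obtain ⟨t, htint⟩ := Nat.modEq_iff_dvd.mp hm
    simp only [Prod.mk.injEq]
    rcases le_or_gt 0 t with htpos | htneg
    · have h := key lam' mu' lam mu t htpos hPq hPp (by push_cast at htint ⊢; linarith)
      omega
    · have h := key lam mu lam' mu' (-t) (by omega) hPp hPq (by push_cast at htint ⊢; linarith)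
      omega
  have hcard_le : L.card ≤ n₁ := by
    have h := Finset.card_le_card_of_injOn
      (fun p : ℕ × ℕ => ((p.1 * n₂ + p.2 * n₃ : ℕ) : ZMod n₁))
      (fun a _ => Finset.mem_univ _) hinj
    calc L.card ≤ (Finset.univ : Finset (ZMod n₁)).card := h
    _ = n₁ := by rw [Finset.card_univ, ZMod.card]
  have hN1_le : N₁ ≤ n₁ := hcardL ▸ hcard_le
  -- divisibility: n₁ ∣ N₁
  have hdvd2 : n₁ ∣ N₁ * n₂ := ⟨N₂, by rw [← X12]; ring⟩
  have hdvd3 : n₁ ∣ N₁ * n₃ := ⟨N₃, by rw [← X13]; ring⟩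
  have hdvdg : n₁ ∣ N₁ * Nat.gcd n₂ n₃ := by
    rw [← Nat.gcd_mul_left]; exact Nat.dvd_gcd hdvd2 hdvd3
  have hcop : Nat.Coprime n₁ (Nat.gcd n₂ n₃) := hgcd
  have hdvd : n₁ ∣ N₁ := hcop.dvd_of_dvd_mul_right hdvdg
  have hN1pos : 0 < N₁ := by
    rw [hN₁]
    have h := Nat.mul_pos hr₁₂ hr₁₃
    linarith [Nat.zero_le (r₁₂ * r₂₃), Nat.zero_le (r₁₃ * r₃₂)]
  have hEq1 : N₁ = n₁ := le_antisymm hN1_le (Nat.le_of_dvd hN1pos hdvd)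
  refine ⟨hEq1.symm, ?_, ?_⟩
  · have h : N₂ * n₁ = n₂ * n₁ := by rw [X12, hEq1]; ring
    exact (Nat.eq_of_mul_eq_mul_right h1 h).symm
  · have h : N₃ * n₁ = n₃ * n₁ := by rw [X13, hEq1]; ring
    exact (Nat.eq_of_mul_eq_mul_right h1 h).symm
end
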